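/- arXiv:1911.11618 — 14 statements merged into one kernel-verified Lean document; each statement's English description precedes it below -/
import Mathlib

section
/- A T0 topological space X is a d-space (monotone convergence space) if and only if D_c(X) = S_c(X), that is, if and only if for every subset D of X that is directed under the specialization order there exists a point x ∈ X with cl(D) = cl{x}. -/
open Set Topology TopologicalSpace

universe u

/-- The specialization order of a topological space: `x ≤ y` iff `x ∈ closure {y}`. -/
def specLE {X : Type u} [TopologicalSpace X] (x y : X) : Prop := x ∈ closure ({y} : Set X)

/-- `D` is nonempty and directed under the specialization order. -/
def SpecDirected {X : Type u} [TopologicalSpace X] (D : Set X) : Prop :=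
  D.Nonempty ∧ ∀ a ∈ D, ∀ b ∈ D, ∃ c ∈ D, specLE a c ∧ specLE b c

/-- `s` is a least upper bound of `D` for the specialization order. -/
def IsSpecLUB {X : Type u} [TopologicalSpace X] (D : Set X) (s : X) : Prop :=
  (∀ d ∈ D, specLE d s) ∧ ∀ u : X, (∀ d ∈ D, specLE d u) → specLE s u

/-- A space is a d-space (monotone convergence space) if it is `T0`, its specialization
poset is a dcpo, and every open set is Scott-open (every directed set having a supremum
belonging to the open set meets the open set). -/
def IsDSpace (X : Type u) [TopologicalSpace X] : Prop :=
  T0Space X ∧ (∀ D : Set X, SpecDirected D → ∃ s : X, IsSpecLUB D s) ∧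
    ∀ U : Set X, IsOpen U → ∀ D : Set X, SpecDirected D → ∀ s : X, IsSpecLUB D s →
      s ∈ U → (D ∩ U).Nonempty

theorem dSpace_iff_directed_closures_are_point_closures
    (X : Type u) [TopologicalSpace X] [T0Space X] :
    (IsDSpace X ↔
      {C : Set X | ∃ D : Set X, SpecDirected D ∧ C = closure D} =
        {C : Set X | ∃ x : X, C = closure ({x} : Set X)}) ∧
    (IsDSpace X ↔
      ∀ D : Set X, SpecDirected D → ∃ x : X, closure D = closure ({x} : Set X)) := by
  -- basic facts
  have hrefl : ∀ x : X, specLE x x := fun x => subset_closure rfl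
  have hsingDir : ∀ x : X, SpecDirected ({x} : Set X) := by
    intro x
    refine ⟨⟨x, rfl⟩, ?_⟩
    rintro a rfl b rfl
    exact ⟨b, rfl, hrefl b, hrefl b⟩
  -- any x with closure D = closure {x} is a lub of D
  have hlub : ∀ D : Set X, SpecDirected D → ∀ x : X,
      closure D = closure ({x} : Set X) → IsSpecLUB D x := by
    intro D _ x hx
    constructor
    · intro d hd
      have : d ∈ closure D := subset_closure hd
      rw [hx] at this
      exact this
    · intro u hu
      have hDu : D ⊆ closure ({u} : Set X) := fun d hd => hu d hd
      have : closure D ⊆ closure ({u} : Set X) := closure_minimal hDu isClosed_closure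
      exact this (hx ▸ subset_closure rfl)
  have hpt : IsDSpace X ↔
      ∀ D : Set X, SpecDirected D → ∃ x : X, closure D = closure ({x} : Set X) := by
    constructor
    · rintro ⟨_, hdcpo, hscott⟩ D hD
      obtain ⟨s, hs⟩ := hdcpo D hD
      refine ⟨s, le_antisymm ?_ ?_⟩
      · exact closure_minimal (fun d hd => hs.1 d hd) isClosed_closure
      · refine closure_minimal (Set.singleton_subset_iff.mpr ?_) isClosed_closure
        by_contra hsn
        obtain ⟨d, hdD, hdU⟩ :=
          hscott _ isClosed_closure.isOpen_compl D hD s hs hsn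
        exact hdU (subset_closure hdD)
    · intro h
      refine ⟨inferInstance, fun D hD => ?_, ?_⟩
      · obtain ⟨x, hx⟩ := h D hD
        exact ⟨x, hlub D hD x hx⟩
      · intro U hU D hD s hs hsU
        obtain ⟨x, hx⟩ := h D hD
        have hxlub := hlub D hD x hx
        have h1 : specLE s x := hs.2 x hxlub.1
        have h2 : specLE x s := hxlub.2 s hs.1
        have hxs : x = s := by
          have hsp1 : x ⤳ s := specializes_iff_mem_closure.mpr h1
          have hsp2 : s ⤳ x := specializes_iff_mem_closure.mpr h2
          exact (hsp1.antisymm hsp2).eq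
        have hscl : s ∈ closure D := by
          rw [hx, ← hxs]
          exact subset_closure rfl
        obtain ⟨d, hdU, hdD⟩ := mem_closure_iff.mp hscl U hU hsU
        exact ⟨d, hdD, hdU⟩
  refine ⟨?_, hpt⟩
  rw [hpt]
  constructor
  · intro h
    ext C
    simp only [Set.mem_setOf_eq]
    constructor
    · rintro ⟨D, hD, rfl⟩
      exact h D hD
    · rintro ⟨x, rfl⟩
      exact ⟨{x}, hsingDir x, rfl⟩
  · intro h D hD
    have : closure D ∈ {C : Set X | ∃ x : X, C = closure ({x} : Set X)} := by
      rw [← h]; exact ⟨D, hD, rfl⟩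
    exact this
end

section
/- Let X be a T0 space, Y a well-filtered space, and f : X → Y a continuous map. If a subset A of X has the Rudin property, then there exists a unique y_A ∈ Y such that cl(f(A)) = cl{y_A}. -/
open Set Topology TopologicalSpace

universe u

/-- A subset is saturated if it equals the intersection of the open sets containing it. -/
def IsSaturatedSet {X : Type u} [TopologicalSpace X] (A : Set X) : Prop :=
  A = ⋂₀ {U : Set X | IsOpen U ∧ A ⊆ U}

/-- A filtered family of nonempty compact saturated subsets of `X`. -/
def IsCptSatFiltered {X : Type u} [TopologicalSpace X] (Ks : Set (Set X)) : Prop :=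
  Ks.Nonempty ∧ (∀ K ∈ Ks, K.Nonempty ∧ IsCompact K ∧ IsSaturatedSet K) ∧
    ∀ K₁ ∈ Ks, ∀ K₂ ∈ Ks, ∃ K₃ ∈ Ks, K₃ ⊆ K₁ ∩ K₂

/-- A space is well-filtered if it is `T0` and for every filtered family `Ks` of nonempty
compact saturated subsets and every open `U` with `⋂₀ Ks ⊆ U`, some member of `Ks` is
contained in `U`. -/
def WellFiltered (X : Type u) [TopologicalSpace X] : Prop :=
  T0Space X ∧ ∀ Ks : Set (Set X), IsCptSatFiltered Ks →
    ∀ U : Set X, IsOpen U → ⋂₀ Ks ⊆ U → ∃ K ∈ Ks, K ⊆ U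

/-- `A` has the Rudin property: there is a filtered family `Ks` of nonempty compact
saturated sets such that `closure A` is a minimal closed set meeting every member of `Ks`. -/
def HasRudinProperty {X : Type u} [TopologicalSpace X] (A : Set X) : Prop :=
  ∃ Ks : Set (Set X), IsCptSatFiltered Ks ∧
    (∀ K ∈ Ks, (K ∩ closure A).Nonempty) ∧
    ∀ C : Set X, IsClosed C → (∀ K ∈ Ks, (K ∩ C).Nonempty) → C ⊆ closure A → C = closure A

namespace RudinAux

variable {X : Type u} [TopologicalSpace X]

/-- The saturation of a set. -/
def sat (S : Set X) : Set X := ⋂₀ {U : Set X | IsOpen U ∧ S ⊆ U}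

lemma subset_sat (S : Set X) : S ⊆ sat S :=
  fun x hx => mem_sInter.2 fun _ hU => hU.2 hx

lemma sat_subset {S U : Set X} (hU : IsOpen U) (hSU : S ⊆ U) : sat S ⊆ U :=
  sInter_subset_of_mem ⟨hU, hSU⟩

lemma sat_mono {S T : Set X} (h : S ⊆ T) : sat S ⊆ sat T :=
  fun x hx => mem_sInter.2 fun U hU => mem_sInter.1 hx U ⟨hU.1, h.trans hU.2⟩

lemma sat_saturated (S : Set X) : IsSaturatedSet (sat S) := by
  apply Subset.antisymm (subset_sat _)
  intro x hx
  refine mem_sInter.2 fun U hU => ?_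
  exact mem_sInter.1 hx U ⟨hU.1, sat_subset hU.1 hU.2⟩

lemma sat_compact {S : Set X} (hS : IsCompact S) : IsCompact (sat S) := by
  refine isCompact_of_finite_subcover fun {ι} U hUo hcov => ?_
  obtain ⟨t, ht⟩ := hS.elim_finite_subcover U hUo ((subset_sat S).trans hcov)
  exact ⟨t, sat_subset (isOpen_biUnion fun i _ => hUo i) ht⟩

lemma nonempty_inter_of_sat {S C : Set X} (hC : IsClosed C)
    (h : (C ∩ sat S).Nonempty) : (C ∩ S).Nonempty := by
  by_contra hne
  have hsub : S ⊆ Cᶜ := fun x hx => fun hxC =>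
    hne ⟨x, hxC, hx⟩
  obtain ⟨x, hxC, hxS⟩ := h
  exact sat_subset hC.isOpen_compl hsub hxS hxC

end RudinAux

open RudinAux

theorem rudin_set_maps_to_point_closure_in_well_filtered
    {X Y : Type u} [TopologicalSpace X] [TopologicalSpace Y] [T0Space X]
    (hY : WellFiltered Y) (f : X → Y) (hf : Continuous f)
    (A : Set X) (hA : HasRudinProperty A) :
    ∃! y : Y, closure (f '' A) = closure ({y} : Set Y) := by
  haveI : T0Space Y := hY.1
  obtain ⟨Ks, ⟨⟨K₀, hK₀⟩, hmem, hfil⟩, hmeet, hmin⟩ := hA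
  -- the image family
  set g : Set X → Set Y := fun K => sat (f '' (K ∩ closure A)) with hg
  set Ks' : Set (Set Y) := g '' Ks with hKs'
  have hfA : ∀ K ∈ Ks, f '' (K ∩ closure A) ⊆ closure (f '' A) := by
    intro K hK
    refine (image_mono (f := f) inter_subset_right).trans ?_
    exact (image_closure_subset_closure_image hf)
  have hKs'filtered : IsCptSatFiltered Ks' := by
    refine ⟨⟨g K₀, mem_image_of_mem g hK₀⟩, ?_, ?_⟩
    · rintro _ ⟨K, hK, rfl⟩
      refine ⟨((hmeet K hK).image f).mono (subset_sat _), ?_, sat_saturated _⟩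
      exact sat_compact ((((hmem K hK).2.1).inter_right isClosed_closure).image hf)
    · rintro _ ⟨K₁, hK₁, rfl⟩ _ ⟨K₂, hK₂, rfl⟩
      obtain ⟨K₃, hK₃, hsub⟩ := hfil K₁ hK₁ K₂ hK₂
      refine ⟨g K₃, mem_image_of_mem g hK₃, subset_inter ?_ ?_⟩
      · exact sat_mono (image_mono (f := f) (inter_subset_inter_left _
          (hsub.trans inter_subset_left)))
      · exact sat_mono (image_mono (f := f) (inter_subset_inter_left _
          (hsub.trans inter_subset_right)))
  -- closure (f '' A) is a Rudin closed set for Ks'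
  have hmeet' : ∀ K' ∈ Ks', (K' ∩ closure (f '' A)).Nonempty := by
    rintro _ ⟨K, hK, rfl⟩
    obtain ⟨x, hxK, hxA⟩ := hmeet K hK
    exact ⟨f x, subset_sat _ (mem_image_of_mem f ⟨hxK, hxA⟩),
      image_closure_subset_closure_image hf (mem_image_of_mem f hxA)⟩
  have hmin' : ∀ C : Set Y, IsClosed C → (∀ K' ∈ Ks', (K' ∩ C).Nonempty) →
      C ⊆ closure (f '' A) → C = closure (f '' A) := by
    intro C hC hCmeet hCsub
    have hD : f ⁻¹' C ∩ closure A = closure A := by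
      apply hmin _ ((hC.preimage hf).inter isClosed_closure)
      · intro K hK
        have := nonempty_inter_of_sat hC
          ((hCmeet (g K) (mem_image_of_mem g hK)).imp fun y hy => ⟨hy.2, hy.1⟩)
        obtain ⟨y, hyC, x, ⟨hxK, hxA⟩, rfl⟩ := this
        exact ⟨x, hxK, hyC, hxA⟩
      · exact inter_subset_right
    have hAC : A ⊆ f ⁻¹' C := fun x hx =>
      (hD ▸ (subset_closure hx : x ∈ closure A)).1
    refine hCsub.antisymm (closure_minimal ?_ hC)
    exact image_subset_iff.2 hAC
  -- use well-filteredness to find a point in ⋂₀ Ks' ∩ closure (f '' A)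
  have hpt : (⋂₀ Ks' ∩ closure (f '' A)).Nonempty := by
    by_contra hne
    have hsub : ⋂₀ Ks' ⊆ (closure (f '' A))ᶜ := fun y hy hyc =>
      hne ⟨y, hy, hyc⟩
    obtain ⟨K', hK', hK'sub⟩ := hY.2 Ks' hKs'filtered _
      isClosed_closure.isOpen_compl hsub
    obtain ⟨y, hy1, hy2⟩ := hmeet' K' hK'
    exact hK'sub hy1 hy2
  obtain ⟨y, hyK, hyA⟩ := hpt
  have hyeq : closure ({y} : Set Y) = closure (f '' A) := by
    apply hmin' _ isClosed_closure
    · intro K' hK'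
      exact ⟨y, mem_sInter.1 hyK K' hK', subset_closure rfl⟩
    · exact closure_minimal (singleton_subset_iff.2 hyA) isClosed_closure
  refine ⟨y, hyeq.symm, fun z hz => ?_⟩
  have : Inseparable z y := by
    rw [inseparable_iff_closure_eq, ← hz, hyeq]
  exact this.eq
end

section
/- For every T0 topological space X, the following chain of inclusions holds: S_c(X) ⊆ D_c(X) ⊆ RD(X) ⊆ WF(X) ⊆ Irr_c(X). -/
open Set Topology TopologicalSpace

universe u

universe v

/-- saturation of a set -/
def satur {Y : Type v} [TopologicalSpace Y] (B : Set Y) : Set Y :=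
  {y | ∀ U : Set Y, IsOpen U → B ⊆ U → y ∈ U}

variable {Y : Type v} [TopologicalSpace Y]

lemma subset_satur (B : Set Y) : B ⊆ satur B := fun y hy U _ hBU => hBU hy

lemma satur_subset {B U : Set Y} (hU : IsOpen U) (h : B ⊆ U) : satur B ⊆ U :=
  fun _ hy => hy U hU h

lemma satur_isSaturated (B : Set Y) : IsSaturatedSet (satur B) := by
  apply Set.Subset.antisymm
  · intro y hy
    exact Set.mem_sInter.2 fun V hV => hV.2 hy
  · intro y hy U hU hBU
    exact Set.mem_sInter.1 hy U ⟨hU, satur_subset hU hBU⟩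

lemma satur_isCompact {B : Set Y} (hB : IsCompact B) : IsCompact (satur B) := by
  refine isCompact_of_finite_subcover fun {ι} U hU hsub => ?_
  obtain ⟨t, ht⟩ := hB.elim_finite_subcover U hU ((subset_satur B).trans hsub)
  exact ⟨t, satur_subset (isOpen_biUnion fun i _ => hU i) ht⟩

lemma satur_mono {B B' : Set Y} (h : B ⊆ B') : satur B ⊆ satur B' :=
  fun y hy U hU hBU => hy U hU (h.trans hBU)

/-- Key lemma: in a well-filtered space, a Rudin-minimal closed set is a point closure. -/
lemma rudin_point {Y : Type v} [TopologicalSpace Y] (hY : WellFiltered Y) {B : Set Y}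
    (hB : IsClosed B) {Ks : Set (Set Y)} (hKs : IsCptSatFiltered Ks)
    (hmeet : ∀ K ∈ Ks, (K ∩ B).Nonempty)
    (hmin : ∀ C : Set Y, IsClosed C → (∀ K ∈ Ks, (K ∩ C).Nonempty) → C ⊆ B → C = B) :
    ∃ y : Y, B = closure ({y} : Set Y) := by
  have hnot : ¬ (⋂₀ Ks ⊆ Bᶜ) := by
    intro h
    obtain ⟨K, hK, hKB⟩ := hY.2 Ks hKs Bᶜ hB.isOpen_compl h
    obtain ⟨z, hz1, hz2⟩ := hmeet K hK
    exact hKB hz1 hz2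
  obtain ⟨y, hyK, hyB⟩ : ∃ y, y ∈ ⋂₀ Ks ∧ y ∈ B := by
    rcases Set.not_subset.1 hnot with ⟨y, hy1, hy2⟩
    exact ⟨y, hy1, not_not.1 hy2⟩
  refine ⟨y, (hmin (closure {y}) isClosed_closure ?_ ?_).symm⟩
  · exact fun K hK => ⟨y, hyK K hK, subset_closure rfl⟩
  · exact hB.closure_subset_iff.2 (Set.singleton_subset_iff.2 hyB)

/-- Every finite T0 space is well-filtered. -/
lemma finite_wellFiltered (Y : Type v) [TopologicalSpace Y] [Finite Y] [T0Space Y] :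
    WellFiltered Y := by
  refine ⟨inferInstance, fun Ks hKs U hU hsub => ?_⟩
  obtain ⟨K₀, hK₀, hmin⟩ : ∃ a ∈ Ks, ∀ a' ∈ Ks, id a' ≤ id a → id a = id a' := by
    obtain ⟨a, ha, h⟩ := Set.Finite.exists_minimalFor id Ks (Set.toFinite Ks) hKs.1
    exact ⟨a, ha, fun a' ha' hle => le_antisymm (h ha' hle) hle⟩
  refine ⟨K₀, hK₀, fun y hy => hsub ?_⟩
  intro K hK
  obtain ⟨K₃, hK₃, hsub3⟩ := hKs.2.2 K₀ hK₀ K hK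
  have h0 : K₀ = K₃ := hmin K₃ hK₃ (hsub3.trans Set.inter_subset_left)
  have h4 : K₀ ⊆ K := by rw [h0]; exact hsub3.trans Set.inter_subset_right
  exact h4 hy

lemma mem_satur_singleton {Y : Type v} [TopologicalSpace Y] {x y : Y} :
    y ∈ satur ({x} : Set Y) ↔ x ∈ closure ({y} : Set Y) := by
  rw [mem_closure_iff]
  constructor
  · intro h o ho hxo
    exact ⟨y, h o ho (Set.singleton_subset_iff.2 hxo), rfl⟩
  · intro h U hU hxU
    obtain ⟨z, hz1, hz2⟩ := h U hU (Set.singleton_subset_iff.1 hxU)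
    exact hz2 ▸ hz1

theorem Sc_subset_Dc_subset_RD_subset_WF_subset_Irrc
    (X : Type u) [TopologicalSpace X] [T0Space X] :
    {C : Set X | ∃ x : X, C = closure ({x} : Set X)} ⊆
        {C : Set X | ∃ D : Set X, SpecDirected D ∧ C = closure D} ∧
      {C : Set X | ∃ D : Set X, SpecDirected D ∧ C = closure D} ⊆
        {C : Set X | IsClosed C ∧ HasRudinProperty C} ∧
      {C : Set X | IsClosed C ∧ HasRudinProperty C} ⊆
        {A : Set X | IsClosed A ∧ A.Nonempty ∧
          ∀ (Y : Type u) [TopologicalSpace Y], WellFiltered Y →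
            ∀ f : X → Y, Continuous f →
              ∃! y : Y, closure (f '' A) = closure ({y} : Set Y)} ∧
      {A : Set X | IsClosed A ∧ A.Nonempty ∧
          ∀ (Y : Type u) [TopologicalSpace Y], WellFiltered Y →
            ∀ f : X → Y, Continuous f →
              ∃! y : Y, closure (f '' A) = closure ({y} : Set Y)} ⊆
        {A : Set X | IsClosed A ∧ IsIrreducible A} := by
  refine ⟨?_, ?_, ?_, ?_⟩
  · -- S_c ⊆ D_c
    rintro C ⟨x, rfl⟩
    refine ⟨{x}, ⟨⟨x, rfl⟩, ?_⟩, rfl⟩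
    intro a ha b hb
    rw [Set.mem_singleton_iff] at ha hb
    exact ⟨x, rfl, by rw [ha]; exact subset_closure rfl,
      by rw [hb]; exact subset_closure rfl⟩
  · -- D_c ⊆ RD
    rintro C ⟨D, hD, rfl⟩
    refine ⟨isClosed_closure, {S | ∃ d ∈ D, S = satur ({d} : Set X)}, ?_, ?_, ?_⟩
    · refine ⟨?_, ?_, ?_⟩
      · obtain ⟨d, hd⟩ := hD.1; exact ⟨_, d, hd, rfl⟩
      · rintro K ⟨d, hd, rfl⟩
        exact ⟨⟨d, subset_satur _ rfl⟩, satur_isCompact isCompact_singleton,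
          satur_isSaturated _⟩
      · rintro K₁ ⟨d₁, hd₁, rfl⟩ K₂ ⟨d₂, hd₂, rfl⟩
        obtain ⟨c, hc, h1, h2⟩ := hD.2 d₁ hd₁ d₂ hd₂
        refine ⟨satur {c}, ⟨c, hc, rfl⟩, Set.subset_inter ?_ ?_⟩ <;>
        · intro y hy
          rw [mem_satur_singleton] at hy ⊢
          first
          | exact (isClosed_closure.closure_subset_iff.2
              (Set.singleton_subset_iff.2 hy)) h1
          | exact (isClosed_closure.closure_subset_iff.2
              (Set.singleton_subset_iff.2 hy)) h2
    · rintro K ⟨d, hd, rfl⟩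
      exact ⟨d, subset_satur _ rfl, subset_closure (subset_closure hd)⟩
    · intro C' hC' hmeet hsub
      rw [closure_closure] at hsub ⊢
      refine Set.Subset.antisymm hsub (closure_minimal ?_ hC')
      intro d hd
      obtain ⟨y, hy1, hy2⟩ := hmeet _ ⟨d, hd, rfl⟩
      exact hC'.closure_subset_iff.2 (Set.singleton_subset_iff.2 hy2)
        (mem_satur_singleton.1 hy1)
  · -- RD ⊆ WF
    rintro C ⟨hCcl, Ks, hKs, hmeet, hmin⟩
    rw [hCcl.closure_eq] at hmeet hmin
    have hCne : C.Nonempty := by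
      obtain ⟨K, hK⟩ := hKs.1
      obtain ⟨z, _, hz⟩ := hmeet K hK
      exact ⟨z, hz⟩
    refine ⟨hCcl, hCne, ?_⟩
    intro Y _ hY f hf
    set Ks' : Set (Set Y) := {S | ∃ K ∈ Ks, S = satur (f '' (K ∩ C))} with hKs'def
    have hKC : ∀ K ∈ Ks, (K ∩ C).Nonempty := hmeet
    have hKs' : IsCptSatFiltered Ks' := by
      refine ⟨?_, ?_, ?_⟩
      · obtain ⟨K, hK⟩ := hKs.1; exact ⟨_, K, hK, rfl⟩
      · rintro S ⟨K, hK, rfl⟩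
        refine ⟨((hKC K hK).image f).mono (subset_satur _), ?_, satur_isSaturated _⟩
        exact satur_isCompact ((((hKs.2.1 K hK).2.1).inter_right hCcl).image hf)
      · rintro S₁ ⟨K₁, hK₁, rfl⟩ S₂ ⟨K₂, hK₂, rfl⟩
        obtain ⟨K₃, hK₃, hsub⟩ := hKs.2.2 K₁ hK₁ K₂ hK₂
        refine ⟨_, ⟨K₃, hK₃, rfl⟩, Set.subset_inter ?_ ?_⟩ <;>
          [exact satur_mono (Set.image_mono (Set.inter_subset_inter_left _
              (hsub.trans Set.inter_subset_left)));
           exact satur_mono (Set.image_mono (Set.inter_subset_inter_left _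
              (hsub.trans Set.inter_subset_right)))]
    have hmeet' : ∀ S ∈ Ks', (S ∩ closure (f '' C)).Nonempty := by
      rintro S ⟨K, hK, rfl⟩
      obtain ⟨x, hxK, hxC⟩ := hKC K hK
      exact ⟨f x, subset_satur _ ⟨x, ⟨hxK, hxC⟩, rfl⟩,
        subset_closure ⟨x, hxC, rfl⟩⟩
    have hmin' : ∀ B : Set Y, IsClosed B → (∀ S ∈ Ks', (S ∩ B).Nonempty) →
        B ⊆ closure (f '' C) → B = closure (f '' C) := by
      intro B hB hBmeet hBsub
      have hmeets : ∀ K ∈ Ks, (K ∩ (f ⁻¹' B ∩ C)).Nonempty := by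
        intro K hK
        obtain ⟨y, hyS, hyB⟩ := hBmeet _ ⟨K, hK, rfl⟩
        by_contra hempty
        rw [Set.not_nonempty_iff_eq_empty] at hempty
        have himg : f '' (K ∩ C) ⊆ Bᶜ := by
          rintro z ⟨x, hx, rfl⟩
          intro hzB
          have : x ∈ K ∩ (f ⁻¹' B ∩ C) := ⟨hx.1, hzB, hx.2⟩
          rw [hempty] at this
          exact this
        exact satur_subset hB.isOpen_compl himg hyS hyB
      have heq := hmin _ ((hB.preimage hf).inter hCcl) hmeets Set.inter_subset_right
      have hCB : C ⊆ f ⁻¹' B := by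
        intro x hx
        rw [← heq] at hx
        exact hx.1
      refine Set.Subset.antisymm hBsub (closure_minimal ?_ hB)
      rintro z ⟨x, hx, rfl⟩
      exact hCB hx
    obtain ⟨y, hy⟩ := rudin_point hY isClosed_closure hKs' hmeet' hmin'
    haveI : T0Space Y := hY.1
    refine ⟨y, hy, fun y' h' => ?_⟩
    exact (inseparable_iff_closure_eq.2 (h'.symm.trans hy)).eq
  · -- WF ⊆ Irr
    rintro A ⟨hA, hAne, hwf⟩
    refine ⟨hA, hAne, ?_⟩
    rintro U V hU hV ⟨a, haA, haU⟩ ⟨b, hbA, hbV⟩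
    by_contra hcon
    rw [Set.not_nonempty_iff_eq_empty] at hcon
    let Y := ULift.{u} (Prop × Prop)
    haveI : T0Space Y := (Homeomorph.ulift (X := Prop × Prop)).symm.t0Space
    haveI : Finite Y := Finite.of_equiv _ Equiv.ulift.symm
    have hYwf : WellFiltered Y := finite_wellFiltered Y
    have hPropOpen : IsOpen {p : Prop | p} := continuous_Prop.1 continuous_id
    have hW₁ : IsOpen {z : Y | z.down.1} :=
      (hPropOpen.preimage continuous_fst).preimage continuous_uliftDown
    have hW₂ : IsOpen {z : Y | z.down.2} :=
      (hPropOpen.preimage continuous_snd).preimage continuous_uliftDown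
    let f : X → Y := fun x => ⟨(x ∈ U, x ∈ V)⟩
    have hf : Continuous f :=
      continuous_uliftUp.comp ((continuous_Prop.2 hU).prodMk (continuous_Prop.2 hV))
    obtain ⟨y, hy, -⟩ := hwf Y hYwf f hf
    have hyU : y.down.1 := by
      have hfa : f a ∈ closure ({y} : Set Y) := hy ▸ subset_closure ⟨a, haA, rfl⟩
      obtain ⟨z, hz1, hz2⟩ := mem_closure_iff.1 hfa _ hW₁ haU
      exact hz2 ▸ hz1
    have hyV : y.down.2 := by
      have hfb : f b ∈ closure ({y} : Set Y) := hy ▸ subset_closure ⟨b, hbA, rfl⟩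
      obtain ⟨z, hz1, hz2⟩ := mem_closure_iff.1 hfb _ hW₂ hbV
      exact hz2 ▸ hz1
    have hymem : y ∈ closure (f '' A) := hy.symm ▸ subset_closure rfl
    obtain ⟨z, ⟨hz1, hz2⟩, x, hxA, rfl⟩ :=
      mem_closure_iff.1 hymem _ (hW₁.inter hW₂) ⟨hyU, hyV⟩
    have : x ∈ A ∩ (U ∩ V) := ⟨hxA, hz1, hz2⟩
    rw [hcon] at this
    exact this
end

section
/- Let X and Y be T0 spaces and f : X → Y a continuous map. If A is a closed K-set of X, then cl(f(A)) is a closed K-set of Y. -/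
open Set Topology TopologicalSpace

universe u

/-- A nonempty subset `A` of a space `X` is a `K`-set if for every continuous map
`f : X → Y` to a `K`-space `Y` there is a unique `y : Y` with
`closure (f '' A) = closure {y}`. -/
def IsKSet (K : (Y : Type u) → [inst : TopologicalSpace Y] → Prop)
    {X : Type u} [TopologicalSpace X] (A : Set X) : Prop :=
  A.Nonempty ∧ ∀ (Y : Type u) [TopologicalSpace Y], K Y →
    ∀ f : X → Y, Continuous f → ∃! y : Y, closure (f '' A) = closure ({y} : Set Y)

/-- `K(X)`: the set of closed `K`-sets of `X`. -/
def KSets (K : (Y : Type u) → [inst : TopologicalSpace Y] → Prop)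
    (X : Type u) [TopologicalSpace X] : Set (Set X) :=
  {A : Set X | IsClosed A ∧ IsKSet K A}

/-- The underlying type of `P_H(G)` for a family `G` of subsets of `X`. -/
structure PH {X : Type u} [TopologicalSpace X] (G : Set (Set X)) : Type u where
  toSet : Set X
  mem : toSet ∈ G

/-- `P_H(G)` carries the lower Vietoris topology, generated by the subbasic open sets
`♦U = {A ∈ G : A ∩ U ≠ ∅}` for `U` open in `X`. -/
instance {X : Type u} [TopologicalSpace X] (G : Set (Set X)) : TopologicalSpace (PH G) :=
  TopologicalSpace.generateFrom
    {V : Set (PH G) | ∃ U : Set X, IsOpen U ∧ V = {A : PH G | (A.toSet ∩ U).Nonempty}}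

theorem closure_image_of_KSet_mem_KSets
    (K : (Y : Type u) → [inst : TopologicalSpace Y] → Prop)
    (hKT0 : ∀ (Y : Type u) [TopologicalSpace Y], K Y → T0Space Y)
    (hKsob : ∀ (Y : Type u) [TopologicalSpace Y], T0Space Y → QuasiSober Y → K Y)
    {X Y : Type u} [TopologicalSpace X] [TopologicalSpace Y] [T0Space X] [T0Space Y]
    (f : X → Y) (hf : Continuous f) (A : Set X) (hA : A ∈ KSets K X) :
    closure (f '' A) ∈ KSets K Y := by
  obtain ⟨hAcl, hAne, hAK⟩ := hA
  refine ⟨isClosed_closure, ⟨(hAne.image f).closure, ?_⟩⟩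
  intro Z _ hZ g hg
  obtain ⟨z, hz, huniq⟩ := hAK Z hZ (g ∘ f) (hg.comp hf)
  have key : closure (g '' closure (f '' A)) = closure (g '' (f '' A)) := by
    apply Subset.antisymm
    · exact closure_minimal ((image_closure_subset_closure_image hg).trans
        Subset.rfl) isClosed_closure
    · exact closure_mono (image_mono (f := g) subset_closure)
  rw [image_comp] at hz huniq
  refine ⟨z, by rw [key, hz], fun y hy => huniq y (by rw [← key, hy])⟩
end

section
/- Let X = X₁ × ⋯ × Xₙ be a finite product of T0 spaces, with projections pᵢ : X → Xᵢ, and let A be an irreducible subset of X. Then A is a K-set if and only if pᵢ(A) is a K-set for every 1 ≤ i ≤ n. -/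
open Set Topology TopologicalSpace

universe u

set_option linter.unusedSectionVars false

section Aux

variable {n : ℕ} {Xs : Fin n → Type u} [∀ i, TopologicalSpace (Xs i)]
  {Y : Type u} [TopologicalSpace Y]

/-- Auxiliary sequence of maps: `KProdAux A f k` collapses the first `k` coordinates. -/
noncomputable def KProdAux [Nonempty Y] (A : Set (∀ i, Xs i)) (f : (∀ i, Xs i) → Y) :
    ℕ → (∀ i, Xs i) → Y
  | 0 => f
  | (k+1) => fun x =>
      if h : k < n then
        Classical.epsilon (fun y =>
          closure ((fun b => KProdAux A f k (Function.update x ⟨k, h⟩ b)) ''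
            ((fun z : ∀ j, Xs j => z ⟨k, h⟩) '' A)) = closure ({y} : Set Y))
      else KProdAux A f k x

variable [Nonempty Y] {A : Set (∀ i, Xs i)} {f : (∀ i, Xs i) → Y}

lemma continuous_update_fixed (i : Fin n) (x : ∀ j, Xs j) :
    Continuous fun b : Xs i => Function.update x i b :=
  (continuous_update i).comp (continuous_const.prodMk continuous_id)

lemma continuous_update_pt (i : Fin n) (c : Xs i) :
    Continuous fun x : ∀ j, Xs j => Function.update x i c :=
  (continuous_update i).comp (continuous_id.prodMk continuous_const)

lemma KProdAux_spec
    (hproj : ∀ (i : Fin n) (φ : Xs i → Y), Continuous φ →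
      ∃ y, closure (φ '' ((fun z : ∀ j, Xs j => z i) '' A)) = closure ({y} : Set Y))
    {k : ℕ} (hc : Continuous (KProdAux A f k)) (h : k < n) (x : ∀ j, Xs j) :
    closure ((fun b => KProdAux A f k (Function.update x ⟨k, h⟩ b)) ''
      ((fun z : ∀ j, Xs j => z ⟨k, h⟩) '' A)) = closure ({KProdAux A f (k+1) x} : Set Y) := by
  have hφ : Continuous fun b => KProdAux A f k (Function.update x ⟨k, h⟩ b) :=
    hc.comp (continuous_update_fixed _ x)
  have hex := hproj ⟨k, h⟩ _ hφ
  have hs := Classical.epsilon_spec hex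
  have hval : KProdAux A f (k+1) x = Classical.epsilon (fun y =>
      closure ((fun b => KProdAux A f k (Function.update x ⟨k, h⟩ b)) ''
        ((fun z : ∀ j, Xs j => z ⟨k, h⟩) '' A)) = closure ({y} : Set Y)) := by
    simp only [KProdAux]
    exact dif_pos h
  rw [hval]
  exact hs

lemma KProdAux_continuous
    (hf : Continuous f)
    (hproj : ∀ (i : Fin n) (φ : Xs i → Y), Continuous φ →
      ∃ y, closure (φ '' ((fun z : ∀ j, Xs j => z i) '' A)) = closure ({y} : Set Y)) :
    ∀ k, Continuous (KProdAux A f k) := by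
  intro k
  induction k with
  | zero => exact hf
  | succ k ih =>
    by_cases h : k < n
    · rw [continuous_def]
      intro U hU
      have hspec := KProdAux_spec hproj ih h
      have hchar : ∀ x, KProdAux A f (k+1) x ∈ U ↔
          ∃ a ∈ A, KProdAux A f k (Function.update x ⟨k, h⟩ (a ⟨k, h⟩)) ∈ U := by
        intro x
        constructor
        · intro hxU
          have hy : KProdAux A f (k+1) x ∈
              closure ((fun b => KProdAux A f k (Function.update x ⟨k, h⟩ b)) ''
                ((fun z : ∀ j, Xs j => z ⟨k, h⟩) '' A)) := by
            rw [hspec x]; exact subset_closure rfl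
          have := hU.inter_closure (t := (fun b => KProdAux A f k (Function.update x ⟨k, h⟩ b)) ''
                ((fun z : ∀ j, Xs j => z ⟨k, h⟩) '' A)) ⟨hxU, hy⟩
          obtain ⟨z, hz⟩ := (closure_nonempty_iff.mp ⟨_, this⟩)
          obtain ⟨hzU, b, ⟨a, haA, rfl⟩, rfl⟩ := hz
          exact ⟨a, haA, hzU⟩
        · rintro ⟨a, haA, haU⟩
          have hmem : KProdAux A f k (Function.update x ⟨k, h⟩ (a ⟨k, h⟩)) ∈
              closure ({KProdAux A f (k+1) x} : Set Y) := by
            rw [← hspec x]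
            exact subset_closure ⟨a ⟨k, h⟩, ⟨a, haA, rfl⟩, rfl⟩
          have := hU.inter_closure (t := ({KProdAux A f (k+1) x} : Set Y)) ⟨haU, hmem⟩
          obtain ⟨z, hzU, hz⟩ := closure_nonempty_iff.mp ⟨_, this⟩
          rw [mem_singleton_iff] at hz
          exact hz ▸ hzU
      have : KProdAux A f (k+1) ⁻¹' U =
          ⋃ a ∈ A, (fun x => KProdAux A f k (Function.update x ⟨k, h⟩ (a ⟨k, h⟩))) ⁻¹' U := by
        ext x
        simp only [mem_preimage, mem_iUnion, exists_prop]
        exact hchar x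
      rw [this]
      exact isOpen_biUnion fun a _ =>
        (ih.comp (continuous_update_pt _ _)).isOpen_preimage U hU
    · have : KProdAux A f (k+1) = KProdAux A f k := by
        funext x; simp only [KProdAux]; exact dif_neg h
      rw [this]; exact ih

end Aux

section Aux2

variable {n : ℕ} {Xs : Fin n → Type u} [∀ i, TopologicalSpace (Xs i)]
  {Y : Type u} [TopologicalSpace Y] [Nonempty Y]
  {A : Set (∀ i, Xs i)} {f : (∀ i, Xs i) → Y}

lemma KProdAux_indep : ∀ (k : ℕ) (x x' : ∀ j, Xs j),
    (∀ j : Fin n, k ≤ j.1 → x j = x' j) → KProdAux A f k x = KProdAux A f k x' := by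
  intro k
  induction k with
  | zero =>
    intro x x' hxx'
    have : x = x' := funext fun j => hxx' j (Nat.zero_le _)
    rw [this]
  | succ k ih =>
    intro x x' hxx'
    by_cases h : k < n
    · have hφ : (fun b => KProdAux A f k (Function.update x ⟨k, h⟩ b)) =
          (fun b => KProdAux A f k (Function.update x' ⟨k, h⟩ b)) := by
        funext b
        refine ih _ _ fun j hj => ?_
        by_cases hji : j = ⟨k, h⟩
        · subst hji; simp
        · rw [Function.update_of_ne hji, Function.update_of_ne hji]
          refine hxx' j ?_
          rcases Nat.lt_or_ge k j.1 with h' | h'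
          · exact h'
          · exact absurd (Fin.ext (le_antisymm h' hj) : j = ⟨k, h⟩) hji
      have e1 : KProdAux A f (k+1) x = Classical.epsilon (fun y =>
          closure ((fun b => KProdAux A f k (Function.update x ⟨k, h⟩ b)) ''
            ((fun z : ∀ j, Xs j => z ⟨k, h⟩) '' A)) = closure ({y} : Set Y)) := by
        simp only [KProdAux]; exact dif_pos h
      have e2 : KProdAux A f (k+1) x' = Classical.epsilon (fun y =>
          closure ((fun b => KProdAux A f k (Function.update x' ⟨k, h⟩ b)) ''
            ((fun z : ∀ j, Xs j => z ⟨k, h⟩) '' A)) = closure ({y} : Set Y)) := by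
        simp only [KProdAux]; exact dif_pos h
      rw [e1, e2, hφ]
    · have e1 : KProdAux A f (k+1) x = KProdAux A f k x := by
        simp only [KProdAux]; exact dif_neg h
      have e2 : KProdAux A f (k+1) x' = KProdAux A f k x' := by
        simp only [KProdAux]; exact dif_neg h
      rw [e1, e2]
      exact ih _ _ fun j hj => absurd (lt_of_le_of_lt hj j.isLt) h

lemma KProdAux_mem_closure_image
    (hf : Continuous f)
    (hproj : ∀ (i : Fin n) (φ : Xs i → Y), Continuous φ →
      ∃ y, closure (φ '' ((fun z : ∀ j, Xs j => z i) '' A)) = closure ({y} : Set Y))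
    (hprod : {x : ∀ j, Xs j | ∀ i, x i ∈ closure ((fun z : ∀ j, Xs j => z i) '' A)} ⊆ closure A) :
    ∀ (k : ℕ) (x : ∀ j, Xs j),
      (∀ i, x i ∈ closure ((fun z : ∀ j, Xs j => z i) '' A)) →
      KProdAux A f k x ∈ closure (f '' A) := by
  intro k
  induction k with
  | zero =>
    intro x hx
    exact image_closure_subset_closure_image hf ⟨x, hprod hx, rfl⟩
  | succ k ih =>
    intro x hx
    by_cases h : k < n
    · have hspec := KProdAux_spec hproj (KProdAux_continuous hf hproj k) h x
      have hy : KProdAux A f (k+1) x ∈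
          closure ((fun b => KProdAux A f k (Function.update x ⟨k, h⟩ b)) ''
            ((fun z : ∀ j, Xs j => z ⟨k, h⟩) '' A)) := by
        rw [hspec]; exact subset_closure rfl
      refine closure_minimal ?_ isClosed_closure hy
      rintro _ ⟨b, ⟨a, haA, rfl⟩, rfl⟩
      refine ih _ fun i => ?_
      by_cases hik : i = ⟨k, h⟩
      · subst hik; simp only [Function.update_self]
        exact subset_closure ⟨a, haA, rfl⟩
      · rw [Function.update_of_ne hik]; exact hx i
    · have e1 : KProdAux A f (k+1) x = KProdAux A f k x := by
        simp only [KProdAux]; exact dif_neg h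
      rw [e1]; exact ih x hx

lemma KProdAux_chain
    (hf : Continuous f)
    (hproj : ∀ (i : Fin n) (φ : Xs i → Y), Continuous φ →
      ∃ y, closure (φ '' ((fun z : ∀ j, Xs j => z i) '' A)) = closure ({y} : Set Y))
    (x : ∀ j, Xs j) (hx : ∀ i, x i ∈ closure ((fun z : ∀ j, Xs j => z i) '' A)) :
    ∀ m : ℕ, f x ∈ closure ({KProdAux A f m x} : Set Y) := by
  intro m
  induction m with
  | zero => exact subset_closure rfl
  | succ m ih =>
    have h2 : KProdAux A f m x ∈ closure ({KProdAux A f (m+1) x} : Set Y) := by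
      by_cases h : m < n
      · have hspec := KProdAux_spec hproj (KProdAux_continuous hf hproj m) h x
        have hφ : Continuous fun b => KProdAux A f m (Function.update x ⟨m, h⟩ b) :=
          (KProdAux_continuous hf hproj m).comp (continuous_update_fixed _ x)
        have hmem : KProdAux A f m (Function.update x ⟨m, h⟩ (x ⟨m, h⟩)) ∈
            closure ((fun b => KProdAux A f m (Function.update x ⟨m, h⟩ b)) ''
              ((fun z : ∀ j, Xs j => z ⟨m, h⟩) '' A)) := by
          have := image_closure_subset_closure_image (s := (fun z : ∀ j, Xs j => z ⟨m, h⟩) '' A) hφ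
          exact this ⟨x ⟨m, h⟩, hx ⟨m, h⟩, rfl⟩
        rw [Function.update_eq_self] at hmem
        rw [← hspec]
        exact hmem
      · have e1 : KProdAux A f (m+1) x = KProdAux A f m x := by
          simp only [KProdAux]; exact dif_neg h
        rw [e1]; exact subset_closure rfl
    exact closure_minimal (singleton_subset_iff.mpr h2) isClosed_closure ih

lemma prod_closure_subset_closureA (hA : IsIrreducible A) :
    {x : ∀ j, Xs j | ∀ i, x i ∈ closure ((fun z : ∀ j, Xs j => z i) '' A)} ⊆ closure A := by
  classical
  intro x hx
  rw [mem_closure_iff]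
  intro U hU hxU
  obtain ⟨I, u, hIu, hsub⟩ := isOpen_pi_iff.mp hU x hxU
  set V : Finset (Set (∀ j, Xs j)) := I.image fun i => (fun z : ∀ j, Xs j => z i) ⁻¹' u i with hV
  have h1 : ∀ v ∈ V, IsOpen v := by
    intro v hv
    obtain ⟨i, hi, rfl⟩ := Finset.mem_image.mp hv
    exact (hIu i hi).1.preimage (continuous_apply i)
  have h2 : ∀ v ∈ V, (A ∩ v).Nonempty := by
    intro v hv
    obtain ⟨i, hi, rfl⟩ := Finset.mem_image.mp hv
    have := mem_closure_iff.mp (hx i) (u i) (hIu i hi).1 (hIu i hi).2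
    obtain ⟨_, hcu, a, haA, rfl⟩ := this
    exact ⟨a, haA, hcu⟩
  obtain ⟨z, hzA, hzV⟩ := isIrreducible_iff_sInter.mp hA V h1 h2
  refine ⟨z, hsub fun i hi => ?_, hzA⟩
  exact hzV _ (Finset.mem_coe.mpr (Finset.mem_image_of_mem _ hi))

end Aux2


theorem isKSet_prod_iff_isKSet_projections
    (K : (Y : Type u) → [inst : TopologicalSpace Y] → Prop)
    (hKT0 : ∀ (Y : Type u) [TopologicalSpace Y], K Y → T0Space Y)
    (hKsob : ∀ (Y : Type u) [TopologicalSpace Y], T0Space Y → QuasiSober Y → K Y)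
    (n : ℕ) (Xs : Fin n → Type u)
    [∀ i, TopologicalSpace (Xs i)] [∀ i, T0Space (Xs i)]
    (A : Set (∀ i, Xs i)) (hA : IsIrreducible A) :
    IsKSet K A ↔ ∀ i : Fin n, IsKSet K ((fun x : ∀ j, Xs j => x i) '' A) := by
  constructor
  · intro hAK i
    refine ⟨hAK.1.image _, fun Y _ hKY f hf => ?_⟩
    have := hAK.2 Y hKY (fun x => f (x i)) (hf.comp (continuous_apply i))
    rw [image_image]
    exact this
  · intro hAK
    refine ⟨hA.nonempty, fun Y _ hKY f hf => ?_⟩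
    obtain ⟨x₀, hx₀⟩ := hA.nonempty
    haveI : T0Space Y := hKT0 Y hKY
    haveI : Nonempty Y := ⟨f x₀⟩
    have hproj : ∀ (i : Fin n) (φ : Xs i → Y), Continuous φ →
        ∃ y, closure (φ '' ((fun z : ∀ j, Xs j => z i) '' A)) = closure ({y} : Set Y) :=
      fun i φ hφ => ((hAK i).2 Y hKY φ hφ).exists
    have hprod := prod_closure_subset_closureA (A := A) hA
    have hx₀B : ∀ i, x₀ i ∈ closure ((fun z : ∀ j, Xs j => z i) '' A) :=
      fun i => subset_closure ⟨x₀, hx₀, rfl⟩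
    set y₀ : Y := KProdAux A f n x₀ with hy₀
    have hexist : closure (f '' A) = closure ({y₀} : Set Y) := by
      apply subset_antisymm
      · refine closure_minimal ?_ isClosed_closure
        rintro _ ⟨x, hxA, rfl⟩
        have hxB : ∀ i, x i ∈ closure ((fun z : ∀ j, Xs j => z i) '' A) :=
          fun i => subset_closure ⟨x, hxA, rfl⟩
        have := KProdAux_chain hf hproj x hxB n
        have heq : KProdAux A f n x = y₀ :=
          KProdAux_indep n x x₀ fun j hj => absurd (lt_of_le_of_lt hj j.isLt) (lt_irrefl n)
        rwa [heq] at this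
      · refine closure_minimal (singleton_subset_iff.mpr ?_) isClosed_closure
        exact KProdAux_mem_closure_image hf hproj hprod n x₀ hx₀B
    refine ⟨y₀, hexist, fun y' hy' => ?_⟩
    have hcc : closure ({y₀} : Set Y) = closure ({y'} : Set Y) := hexist.symm.trans hy'
    have h1 : y₀ ⤳ y' := specializes_iff_mem_closure.mpr (by rw [hcc]; exact subset_closure rfl)
    have h2 : y' ⤳ y₀ := specializes_iff_mem_closure.mpr (by rw [← hcc]; exact subset_closure rfl)
    exact ((h2.antisymm h1).eq)
end

section
/- For every T0 space X, the canonical map η_X : X → P_H(K(X)), x ↦ cl{x}, is a topological embedding (continuous, injective, and open onto its image). -/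
open Set Topology TopologicalSpace

universe u

theorem eta_isEmbedding
    (K : (Y : Type u) → [inst : TopologicalSpace Y] → Prop)
    (hKT0 : ∀ (Y : Type u) [TopologicalSpace Y], K Y → T0Space Y)
    (hKsob : ∀ (Y : Type u) [TopologicalSpace Y], T0Space Y → QuasiSober Y → K Y)
    (X : Type u) [TopologicalSpace X] [T0Space X]
    (η : X → PH (KSets K X)) (hη : ∀ x : X, (η x).toSet = closure ({x} : Set X)) :
    IsEmbedding η := by
  have key : ∀ (U : Set X), IsOpen U →
      η ⁻¹' {A : PH (KSets K X) | (A.toSet ∩ U).Nonempty} = U := by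
    intro U hU
    ext x
    simp only [mem_preimage, mem_setOf_eq, hη]
    constructor
    · rintro ⟨y, hyc, hyU⟩
      rcases mem_closure_iff.mp hyc U hU hyU with ⟨z, hzU, hz⟩
      rwa [← mem_singleton_iff.mp hz]
    · intro hx
      exact ⟨x, subset_closure rfl, hx⟩
  constructor
  · constructor
    rw [show (instTopologicalSpacePH (KSets K X) : TopologicalSpace (PH (KSets K X))) =
      TopologicalSpace.generateFrom _ from rfl, induced_generateFrom_eq]
    refine Eq.trans (generateFrom_setOf_isOpen ‹TopologicalSpace X›).symm ?_
    congr 1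
    ext s
    constructor
    · intro hs
      exact ⟨{A | (A.toSet ∩ s).Nonempty}, ⟨s, hs, rfl⟩, key s hs⟩
    · rintro ⟨V, ⟨U, hU, rfl⟩, rfl⟩
      rw [key U hU]; exact hU
  · intro x y hxy
    have : closure ({x} : Set X) = closure ({y} : Set X) := by
      rw [← hη, ← hη, hxy]
    exact (inseparable_iff_closure_eq.mpr this).eq
end

section
/- Let X be a T0 space and f : X → Y a continuous map to a K-space Y. Then there exists a unique continuous map f* : P_H(K(X)) → Y such that f* ∘ η_X = f; explicitly, f*(A) is the unique point y_A ∈ Y with cl(f(A)) = cl{y_A}. -/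
open Set Topology TopologicalSpace

universe u

lemma myClosure_singleton_inter_open {X : Type*} [TopologicalSpace X] {U : Set X}
    (hU : IsOpen U) (x : X) : (closure ({x} : Set X) ∩ U).Nonempty ↔ x ∈ U := by
  constructor
  · rintro ⟨y, hyc, hyU⟩
    obtain ⟨z, hz1, hz2⟩ := mem_closure_iff.1 hyc U hU hyU
    rwa [← hz2]
  · intro hx
    exact ⟨x, subset_closure rfl, hx⟩

lemma myEta_cont {X : Type u} [TopologicalSpace X] {G : Set (Set X)} (η : X → PH G)
    (hη : ∀ x, (η x).toSet = closure ({x} : Set X)) : Continuous η := by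
  apply continuous_generateFrom_iff.2
  rintro V ⟨U, hU, rfl⟩
  have : η ⁻¹' {A : PH G | (A.toSet ∩ U).Nonempty} = U := by
    ext x
    simp only [Set.mem_preimage, Set.mem_setOf_eq, hη]
    exact myClosure_singleton_inter_open hU x
  rw [this]; exact hU

lemma myPH_mono {X : Type u} [TopologicalSpace X] {G : Set (Set X)}
    (η : X → PH G) (hη : ∀ x, (η x).toSet = closure ({x} : Set X))
    {W : Set (PH G)} (hW : IsOpen W) :
    ∀ (A : PH G) (x : X), x ∈ A.toSet → η x ∈ W → A ∈ W := by
  have hW' : GenerateOpen {V : Set (PH G) | ∃ U : Set X, IsOpen U ∧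
      V = {A : PH G | (A.toSet ∩ U).Nonempty}} W := hW
  clear hW
  induction hW' with
  | basic V hV =>
      obtain ⟨U, hU, rfl⟩ := hV
      rintro A x hxA hxW
      have hxW' : ((η x).toSet ∩ U).Nonempty := hxW
      rw [hη] at hxW'
      have hxU : x ∈ U := (myClosure_singleton_inter_open hU x).1 hxW'
      exact ⟨x, hxA, hxU⟩
  | univ => intros; trivial
  | inter W₁ W₂ h1 h2 ih1 ih2 =>
      intro A x h1' h2'
      exact ⟨ih1 A x h1' h2'.1, ih2 A x h1' h2'.2⟩
  | sUnion S hS ih =>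
      rintro A x h1 ⟨t, ht, h2⟩
      exact ⟨t, ht, ih t ht A x h1 h2⟩

lemma myPH_trace {X : Type u} [TopologicalSpace X] {G : Set (Set X)}
    (η : X → PH G) (hη : ∀ x, (η x).toSet = closure ({x} : Set X))
    {W : Set (PH G)} (hW : IsOpen W) (A : PH G)
    (hne : A.toSet.Nonempty) (hirr : IsPreirreducible A.toSet) (hAW : A ∈ W) :
    ∃ x ∈ A.toSet, η x ∈ W := by
  have hηc : Continuous η := myEta_cont η hη
  have hW' : GenerateOpen {V : Set (PH G) | ∃ U : Set X, IsOpen U ∧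
      V = {A : PH G | (A.toSet ∩ U).Nonempty}} W := hW
  clear hW
  induction hW' with
  | basic V hV =>
      obtain ⟨U, hU, rfl⟩ := hV
      obtain ⟨x, hxA, hxU⟩ := hAW
      refine ⟨x, hxA, ?_⟩
      show ((η x).toSet ∩ U).Nonempty
      rw [hη]
      exact ⟨x, subset_closure rfl, hxU⟩
  | univ =>
      obtain ⟨x, hx⟩ := hne
      exact ⟨x, hx, trivial⟩
  | inter W₁ W₂ h1 h2 ih1 ih2 =>
      obtain ⟨x₁, hx₁, hη₁⟩ := ih1 hAW.1
      obtain ⟨x₂, hx₂, hη₂⟩ := ih2 hAW.2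
      have hW₁ : IsOpen W₁ := h1
      have hW₂ : IsOpen W₂ := h2
      obtain ⟨x, hxA, hx1, hx2⟩ := hirr (η ⁻¹' W₁) (η ⁻¹' W₂) (hW₁.preimage hηc)
        (hW₂.preimage hηc) ⟨x₁, hx₁, hη₁⟩ ⟨x₂, hx₂, hη₂⟩
      exact ⟨x, hxA, hx1, hx2⟩
  | sUnion S hS ih =>
      obtain ⟨t, ht, hAt⟩ := hAW
      obtain ⟨x, hx, hxt⟩ := ih t ht hAt
      exact ⟨x, hx, ⟨t, ht, hxt⟩⟩

lemma myQuasiSober_of_finite (α : Type*) [TopologicalSpace α] [Finite α] : QuasiSober α := by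
  constructor
  intro S hS hScl
  have hfin : (Set.range fun x : S => closure ({(x : α)} : Set α)).Finite :=
    Set.finite_range _
  obtain ⟨z, hz, hSz⟩ := isIrreducible_iff_sUnion_isClosed.1 hS hfin.toFinset
    (by intro z hz
        rw [Set.Finite.mem_toFinset] at hz
        obtain ⟨x, rfl⟩ := hz
        exact isClosed_closure)
    (by intro x hx
        refine ⟨closure {x}, ?_, subset_closure rfl⟩
        rw [hfin.coe_toFinset]
        exact ⟨⟨x, hx⟩, rfl⟩)
  rw [Set.Finite.mem_toFinset] at hz
  obtain ⟨⟨x, hx⟩, rfl⟩ := hz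
  exact ⟨x, le_antisymm (closure_minimal (Set.singleton_subset_iff.2 hx) hScl) hSz⟩

lemma mySierOpen : IsOpen {p : Prop | p} := by
  have : {p : Prop | p} = {True} := by
    ext p; simp only [Set.mem_setOf_eq, Set.mem_singleton_iff, eq_iff_iff, iff_true]
  rw [this]; exact isOpen_singleton_true

lemma myIsPreirreducible_of_isKSet
    (K : (Y : Type u) → [inst : TopologicalSpace Y] → Prop)
    (hKsob : ∀ (Y : Type u) [TopologicalSpace Y], T0Space Y → QuasiSober Y → K Y)
    {X : Type u} [TopologicalSpace X] {A : Set X}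
    (hA : IsKSet K A) : IsPreirreducible A := by
  obtain ⟨-, hA⟩ := hA
  rintro U V hU hV ⟨x₁, hx₁A, hx₁U⟩ ⟨x₂, hx₂A, hx₂V⟩
  by_contra hcon
  rw [Set.not_nonempty_iff_eq_empty] at hcon
  have hnot : ∀ x ∈ A, ¬(x ∈ U ∧ x ∈ V) := by
    intro x hx hxUV
    exact absurd (Set.eq_empty_iff_forall_notMem.1 hcon x ⟨hx, hxUV.1, hxUV.2⟩) (by simp)
  set YS := ULift.{u} Prop × ULift.{u} Prop with hYS
  have hKYS : K YS := hKsob YS inferInstance (myQuasiSober_of_finite YS)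
  set f₀ : X → YS := fun x => (ULift.up (x ∈ U), ULift.up (x ∈ V)) with hf₀
  have hf₀c : Continuous f₀ :=
    ((continuous_uliftUp.comp (isOpen_iff_continuous_mem.1 hU)).prodMk
      (continuous_uliftUp.comp (isOpen_iff_continuous_mem.1 hV)))
  obtain ⟨y, hy, -⟩ := hA YS hKYS f₀ hf₀c
  have hO₁ : IsOpen {z : YS | z.1.down} :=
    (mySierOpen.preimage continuous_uliftDown).preimage continuous_fst
  have hO₂ : IsOpen {z : YS | z.2.down} :=
    (mySierOpen.preimage continuous_uliftDown).preimage continuous_snd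
  have hy₁ : y.1.down := by
    have hz : f₀ x₁ ∈ closure ({y} : Set YS) := by
      rw [← hy]; exact subset_closure ⟨x₁, hx₁A, rfl⟩
    obtain ⟨w, hw1, hw2⟩ := mem_closure_iff.1 hz _ hO₁ hx₁U
    rw [hw2] at hw1; exact hw1
  have hy₂ : y.2.down := by
    have hz : f₀ x₂ ∈ closure ({y} : Set YS) := by
      rw [← hy]; exact subset_closure ⟨x₂, hx₂A, rfl⟩
    obtain ⟨w, hw1, hw2⟩ := mem_closure_iff.1 hz _ hO₂ hx₂V
    rw [hw2] at hw1; exact hw1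
  have hyC : y ∈ {z : YS | ¬(z.1.down ∧ z.2.down)} := by
    have hsub : closure (f₀ '' A) ⊆ {z : YS | ¬(z.1.down ∧ z.2.down)} := by
      apply closure_minimal
      · rintro z ⟨x, hx, rfl⟩
        exact hnot x hx
      · have : {z : YS | ¬(z.1.down ∧ z.2.down)} =
            ({z : YS | z.1.down} ∩ {z : YS | z.2.down})ᶜ := by
          ext z; simp [Set.mem_setOf_eq]
        rw [this]; exact (hO₁.inter hO₂).isClosed_compl
    exact hsub (hy ▸ subset_closure rfl)
  exact hyC ⟨hy₁, hy₂⟩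

theorem exists_unique_continuous_extension_to_PH
    (K : (Y : Type u) → [inst : TopologicalSpace Y] → Prop)
    (hKT0 : ∀ (Y : Type u) [TopologicalSpace Y], K Y → T0Space Y)
    (hKsob : ∀ (Y : Type u) [TopologicalSpace Y], T0Space Y → QuasiSober Y → K Y)
    (X Y : Type u) [TopologicalSpace X] [TopologicalSpace Y] [T0Space X]
    (hY : K Y) (f : X → Y) (hf : Continuous f)
    (η : X → PH (KSets K X)) (hη : ∀ x : X, (η x).toSet = closure ({x} : Set X)) :
    (∃! g : PH (KSets K X) → Y, Continuous g ∧ g ∘ η = f) ∧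
      ∀ g : PH (KSets K X) → Y, Continuous g → g ∘ η = f →
        ∀ A : PH (KSets K X), closure (f '' A.toSet) = closure ({g A} : Set Y) := by
  classical
  haveI hT0Y : T0Space Y := hKT0 Y hY
  have hex : ∀ A : PH (KSets K X), ∃! y : Y,
      closure (f '' A.toSet) = closure ({y} : Set Y) :=
    fun A => A.mem.2.2 Y hY f hf
  set g₀ : PH (KSets K X) → Y := fun A => (hex A).choose with hg₀def
  have hg₀spec : ∀ A, closure (f '' A.toSet) = closure ({g₀ A} : Set Y) :=
    fun A => (hex A).choose_spec.1
  have hg₀uniq : ∀ A y, closure (f '' A.toSet) = closure ({y} : Set Y) → y = g₀ A :=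
    fun A y h => (hex A).choose_spec.2 y h
  have key : ∀ g : PH (KSets K X) → Y, Continuous g → g ∘ η = f →
      ∀ A : PH (KSets K X), closure (f '' A.toSet) = closure ({g A} : Set Y) := by
    intro g hg hgη A
    have hne : A.toSet.Nonempty := A.mem.2.1
    have hirr : IsPreirreducible A.toSet := myIsPreirreducible_of_isKSet K hKsob A.mem.2
    apply le_antisymm
    · apply closure_minimal _ isClosed_closure
      rintro z ⟨x, hxA, rfl⟩
      rw [mem_closure_iff]
      intro V hV hfx
      have hηx : η x ∈ g ⁻¹' V := by
        show g (η x) ∈ V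
        have hco : g (η x) = f x := congrFun hgη x
        rwa [hco]
      have hAV : A ∈ g ⁻¹' V := myPH_mono η hη (hV.preimage hg) A x hxA hηx
      exact ⟨g A, hAV, rfl⟩
    · have hmem : g A ∈ closure (f '' A.toSet) := by
        rw [mem_closure_iff]
        intro V hV hgA
        obtain ⟨x, hxA, hηx⟩ := myPH_trace η hη (hV.preimage hg) A hne hirr hgA
        refine ⟨f x, ?_, ⟨x, hxA, rfl⟩⟩
        have hco : g (η x) = f x := congrFun hgη x
        rw [← hco]; exact hηx
      exact closure_minimal (Set.singleton_subset_iff.2 hmem) isClosed_closure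
  have hg₀c : Continuous g₀ := by
    rw [continuous_def]
    intro V hV
    have heq : g₀ ⁻¹' V = {A : PH (KSets K X) | (A.toSet ∩ f ⁻¹' V).Nonempty} := by
      ext A
      simp only [Set.mem_preimage, Set.mem_setOf_eq]
      constructor
      · intro hgA
        have hm : g₀ A ∈ closure (f '' A.toSet) := (hg₀spec A) ▸ subset_closure rfl
        obtain ⟨z, hz1, x, hxA, rfl⟩ := mem_closure_iff.1 hm V hV hgA
        exact ⟨x, hxA, hz1⟩
      · rintro ⟨x, hxA, hxV⟩
        have hfx : f x ∈ closure ({g₀ A} : Set Y) :=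
          (hg₀spec A) ▸ subset_closure ⟨x, hxA, rfl⟩
        obtain ⟨z, hz1, hz2⟩ := mem_closure_iff.1 hfx V hV hxV
        rwa [← hz2]
    rw [heq]
    exact TopologicalSpace.GenerateOpen.basic _ ⟨f ⁻¹' V, hV.preimage hf, rfl⟩
  have hg₀η : g₀ ∘ η = f := by
    funext x
    have h1 : closure (f '' (η x).toSet) = closure ({f x} : Set Y) := by
      rw [hη x, closure_image_closure hf, Set.image_singleton]
    exact (hg₀uniq (η x) (f x) h1).symm
  refine ⟨⟨g₀, ⟨hg₀c, hg₀η⟩, ?_⟩, key⟩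
  rintro g ⟨hgc, hgη⟩
  funext A
  have h1 := key g hgc hgη A
  have h2 := hg₀spec A
  exact (inseparable_iff_closure_eq.2 (by rw [← h1, h2])).eq
end

section
/- Let X be a T0 space. If P_H(K(X)) is a K-space, then the pair (P_H(K(X)), η_X) is a K-reflection of X: for every continuous map f : X → Y to a K-space Y there exists a unique continuous map f* : P_H(K(X)) → Y with f* ∘ η_X = f. -/
open Set Topology TopologicalSpace

universe u

lemma closure_image_of_closure_eq {Z W : Type u} [TopologicalSpace Z] [TopologicalSpace W]
    {h : Z → W} (hc : Continuous h) {S : Set Z} {b : Z}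
    (hS : closure S = closure ({b} : Set Z)) :
    closure (h '' S) = closure ({h b} : Set W) := by
  apply subset_antisymm
  · apply closure_minimal _ isClosed_closure
    rintro w ⟨z, hz, rfl⟩
    have hz' : z ∈ closure ({b} : Set Z) := hS ▸ subset_closure hz
    have := image_closure_subset_closure_image hc (s := ({b} : Set Z)) ⟨z, hz', rfl⟩
    rwa [image_singleton] at this
  · apply closure_minimal _ isClosed_closure
    rintro w (rfl : w = h b)
    have hb : b ∈ closure S := hS ▸ subset_closure rfl
    exact image_closure_subset_closure_image hc ⟨b, hb, rfl⟩

theorem PH_is_K_reflection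
    (K : (Y : Type u) → [inst : TopologicalSpace Y] → Prop)
    (hKT0 : ∀ (Y : Type u) [TopologicalSpace Y], K Y → T0Space Y)
    (hKsob : ∀ (Y : Type u) [TopologicalSpace Y], T0Space Y → QuasiSober Y → K Y)
    (X : Type u) [TopologicalSpace X] [T0Space X]
    (η : X → PH (KSets K X)) (hη : ∀ x : X, (η x).toSet = closure ({x} : Set X))
    (hPH : K (PH (KSets K X))) :
    Continuous η ∧
      ∀ (Y : Type u) [TopologicalSpace Y], K Y → ∀ f : X → Y, Continuous f →
        ∃! g : PH (KSets K X) → Y, Continuous g ∧ g ∘ η = f := by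
  classical
  have hdopen : ∀ U : Set X, IsOpen U →
      IsOpen {A : PH (KSets K X) | (A.toSet ∩ U).Nonempty} :=
    fun U hU => TopologicalSpace.GenerateOpen.basic _ ⟨U, hU, rfl⟩
  have hdiam : ∀ (U : Set X), IsOpen U → ∀ x : X, ((η x).toSet ∩ U).Nonempty ↔ x ∈ U := by
    intro U hU x
    rw [hη]
    constructor
    · rintro ⟨z, hz, hzU⟩
      rcases mem_closure_iff.mp hz U hU hzU with ⟨w, _, hw⟩
      rw [mem_singleton_iff] at hw
      subst hw; assumption
    · intro hx
      exact ⟨x, subset_closure rfl, hx⟩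
  have hηc : Continuous η := by
    apply continuous_generateFrom_iff.mpr
    rintro V ⟨U, hU, rfl⟩
    have : η ⁻¹' {A : PH (KSets K X) | (A.toSet ∩ U).Nonempty} = U := by
      ext x; exact hdiam U hU x
    rw [this]; exact hU
  refine ⟨hηc, ?_⟩
  intro Y tY hY f hf
  have hex : ∀ B : PH (KSets K X), ∃! y : Y, closure (f '' B.toSet) = closure ({y} : Set Y) :=
    fun B => B.mem.2.2 Y hY f hf
  set g : PH (KSets K X) → Y := fun B => (hex B).exists.choose with hgdef
  have hgspec : ∀ B, closure (f '' B.toSet) = closure ({g B} : Set Y) :=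
    fun B => (hex B).exists.choose_spec
  have hgc : Continuous g := by
    rw [continuous_def]
    intro V hV
    have : g ⁻¹' V = {A : PH (KSets K X) | (A.toSet ∩ f ⁻¹' V).Nonempty} := by
      ext B
      constructor
      · intro hgV
        have : g B ∈ closure (f '' B.toSet) := (hgspec B) ▸ subset_closure rfl
        rcases mem_closure_iff.mp this V hV hgV with ⟨w, hwV, z, hz, rfl⟩
        exact ⟨z, hz, hwV⟩
      · rintro ⟨z, hz, hzV⟩
        have : f z ∈ closure ({g B} : Set Y) := (hgspec B) ▸ subset_closure ⟨z, hz, rfl⟩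
        rcases mem_closure_iff.mp this V hV hzV with ⟨w, hwV, hw⟩
        rw [mem_singleton_iff] at hw
        subst hw; assumption
    rw [this]
    exact hdopen _ (hf.isOpen_preimage V hV)
  have hgη : g ∘ η = f := by
    funext x
    have hcl : closure (f '' (η x).toSet) = closure ({f x} : Set Y) := by
      rw [hη]
      exact closure_image_of_closure_eq hf (closure_closure)
    exact (hex (η x)).unique ((hex (η x)).exists.choose_spec) hcl
  refine ⟨g, ⟨hgc, hgη⟩, ?_⟩
  rintro g' ⟨hg'c, hg'η⟩
  funext B
  obtain ⟨C, hC, -⟩ := B.mem.2.2 (PH (KSets K X)) hPH η hηc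
  have hmeet : ∀ U : Set X, IsOpen U → ((B.toSet ∩ U).Nonempty ↔ (C.toSet ∩ U).Nonempty) := by
    intro U hU
    constructor
    · rintro ⟨x, hxB, hxU⟩
      have hmem : η x ∈ closure ({C} : Set (PH (KSets K X))) :=
        hC ▸ subset_closure ⟨x, hxB, rfl⟩
      rcases mem_closure_iff.mp hmem _ (hdopen U hU) ((hdiam U hU x).mpr hxU) with ⟨D, hD, hDC⟩
      rw [mem_singleton_iff] at hDC; subst hDC
      exact hD
    · intro hCU
      have hmem : C ∈ closure (η '' B.toSet) := hC ▸ subset_closure rfl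
      rcases mem_closure_iff.mp hmem _ (hdopen U hU) hCU with ⟨D, hD, x, hxB, rfl⟩
      exact ⟨x, hxB, (hdiam U hU x).mp hD⟩
  have hsub1 : B.toSet ⊆ C.toSet := by
    by_contra h
    rcases not_subset.mp h with ⟨x, hxB, hxC⟩
    rcases (hmeet _ C.mem.1.isOpen_compl).mp ⟨x, hxB, hxC⟩ with ⟨z, hz1, hz2⟩
    exact hz2 hz1
  have hsub2 : C.toSet ⊆ B.toSet := by
    by_contra h
    rcases not_subset.mp h with ⟨x, hxC, hxB⟩
    rcases (hmeet _ B.mem.1.isOpen_compl).mpr ⟨x, hxC, hxB⟩ with ⟨z, hz1, hz2⟩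
    exact hz2 hz1
  have hCB : C = B := by
    have hss : C.toSet = B.toSet := subset_antisymm hsub2 hsub1
    rcases C with ⟨Cs, hCs⟩; rcases B with ⟨Bs, hBs⟩
    simp only at hss
    subst hss; rfl
  subst hCB
  have key : closure (f '' C.toSet) = closure ({g' C} : Set Y) := by
    have := closure_image_of_closure_eq hg'c hC
    rwa [← image_comp, hg'η] at this
  exact (hex C).unique key (hgspec C)
end

section
/- Suppose K is adequate and closed with respect to homeomorphisms. Then for every T0 space X the following are equivalent: (1) X is a K-space; (2) K(X) = S_c(X), i.e., every closed K-set of X is the closure of a (unique) point; (3) X is homeomorphic to P_H(K(X)). -/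
open Set Topology TopologicalSpace

universe u

theorem PH.ext' {X : Type u} [TopologicalSpace X] {G : Set (Set X)} {A B : PH G}
    (h : A.toSet = B.toSet) : A = B := by
  cases A; cases B; cases h; rfl

theorem kSpace_iff_KSets_eq_Sc_iff_homeomorph_PH
    (K : (Y : Type u) → [inst : TopologicalSpace Y] → Prop)
    (hKT0 : ∀ (Y : Type u) [TopologicalSpace Y], K Y → T0Space Y)
    (hKsob : ∀ (Y : Type u) [TopologicalSpace Y], T0Space Y → QuasiSober Y → K Y)
    (hAd : ∀ (Z : Type u) [TopologicalSpace Z], T0Space Z → K (PH (KSets K Z)))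
    (hHomeo : ∀ (Y Z : Type u) [TopologicalSpace Y] [TopologicalSpace Z],
      K Y → Nonempty (Y ≃ₜ Z) → K Z)
    (X : Type u) [TopologicalSpace X] [T0Space X] :
    (K X ↔ KSets K X = {A : Set X | ∃ x : X, A = closure ({x} : Set X)}) ∧
      (K X ↔ Nonempty (X ≃ₜ PH (KSets K X))) := by
  have hSc : ∀ x : X, closure ({x} : Set X) ∈ KSets K X := by
    intro x
    refine ⟨isClosed_closure, ⟨x, subset_closure rfl⟩, ?_⟩
    intro Y _ hY f hf
    haveI := hKT0 Y hY
    have heq : closure (f '' closure ({x} : Set X)) = closure ({f x} : Set Y) := by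
      apply subset_antisymm
      · apply closure_minimal _ isClosed_closure
        have := image_closure_subset_closure_image (s := ({x} : Set X)) hf
        rwa [image_singleton] at this
      · exact closure_mono (singleton_subset_iff.2 ⟨x, subset_closure rfl, rfl⟩)
    refine ⟨f x, heq, ?_⟩
    intro y hy
    have : closure ({y} : Set Y) = closure ({f x} : Set Y) := by rw [← hy, heq]
    exact (inseparable_iff_closure_eq.mpr this).eq
  have hxU : ∀ (x : X) (U : Set X), IsOpen U →
      ((closure ({x} : Set X) ∩ U).Nonempty ↔ x ∈ U) := by
    intro x U hU
    constructor
    · rintro ⟨z, hz, hzU⟩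
      obtain ⟨w, hwU, hwx⟩ := mem_closure_iff.mp hz U hU hzU
      rwa [← hwx]
    · intro hx; exact ⟨x, subset_closure rfl, hx⟩
  have h12 : K X → KSets K X = {A : Set X | ∃ x : X, A = closure ({x} : Set X)} := by
    intro hKX
    ext A
    constructor
    · rintro ⟨hAc, hAne, hA⟩
      obtain ⟨y, hy, -⟩ := hA X hKX id continuous_id
      exact ⟨y, by rw [← hy, image_id, hAc.closure_eq]⟩
    · rintro ⟨x, rfl⟩; exact hSc x
  have h23 : KSets K X = {A : Set X | ∃ x : X, A = closure ({x} : Set X)} →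
      Nonempty (X ≃ₜ PH (KSets K X)) := by
    intro h2
    set f : X → PH (KSets K X) := fun x => ⟨closure {x}, hSc x⟩ with hf
    have hinj : Function.Injective f := by
      intro a b h
      have : closure ({a} : Set X) = closure ({b} : Set X) := congrArg PH.toSet h
      exact (inseparable_iff_closure_eq.mpr this).eq
    have hsurj : Function.Surjective f := by
      intro A
      obtain ⟨x, hx⟩ := (Set.ext_iff.mp h2 A.toSet).mp A.mem
      exact ⟨x, PH.ext' hx.symm⟩
    have hcont : Continuous f := by
      apply continuous_generateFrom_iff.mpr
      rintro V ⟨U, hU, rfl⟩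
      have hpre : f ⁻¹' {A : PH (KSets K X) | (A.toSet ∩ U).Nonempty} = U := by
        ext x
        simpa using hxU x U hU
      rw [hpre]; exact hU
    have hopen : IsOpenMap f := by
      intro U hU
      have himg : f '' U = {A : PH (KSets K X) | (A.toSet ∩ U).Nonempty} := by
        ext A
        constructor
        · rintro ⟨x, hx, rfl⟩
          exact ⟨x, subset_closure rfl, hx⟩
        · intro hA
          obtain ⟨x, rfl⟩ := hsurj A
          exact ⟨x, (hxU x U hU).mp hA, rfl⟩
      rw [himg]
      exact TopologicalSpace.isOpen_generateFrom_of_mem ⟨U, hU, rfl⟩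
    exact ⟨Equiv.toHomeomorphOfContinuousOpen (Equiv.ofBijective f ⟨hinj, hsurj⟩) hcont hopen⟩
  have h31 : Nonempty (X ≃ₜ PH (KSets K X)) → K X := by
    rintro ⟨e⟩
    exact hHomeo _ _ (hAd X ‹T0Space X›) ⟨e.symm⟩
  exact ⟨⟨h12, fun h => h31 (h23 h)⟩, ⟨fun h => h23 (h12 h), h31⟩⟩
end

section
/- Suppose K is adequate and closed with respect to homeomorphisms. If Y is a retract of a K-space X (i.e., there are continuous maps f : X → Y and g : Y → X with f ∘ g = id_Y) and Y is T0, then Y is a K-space. -/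
open Set Topology TopologicalSpace

universe u

theorem retract_of_kSpace_is_kSpace
    (K : (Y : Type u) → [inst : TopologicalSpace Y] → Prop)
    (hKT0 : ∀ (Y : Type u) [TopologicalSpace Y], K Y → T0Space Y)
    (hKsob : ∀ (Y : Type u) [TopologicalSpace Y], T0Space Y → QuasiSober Y → K Y)
    (hAd : ∀ (Z : Type u) [TopologicalSpace Z], T0Space Z → K (PH (KSets K Z)))
    (hHomeo : ∀ (Y Z : Type u) [TopologicalSpace Y] [TopologicalSpace Z],
      K Y → Nonempty (Y ≃ₜ Z) → K Z)
    {X Y : Type u} [TopologicalSpace X] [TopologicalSpace Y] [T0Space Y]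
    (hX : K X) (f : X → Y) (g : Y → X) (hf : Continuous f) (hg : Continuous g)
    (hfg : f ∘ g = id) : K Y := by

  classical
  -- closure of a singleton meets an open set iff the point is in it
  have hmeet : ∀ {Z : Type u} [TopologicalSpace Z] (z : Z) (U : Set Z), IsOpen U →
      ((closure ({z} : Set Z) ∩ U).Nonempty ↔ z ∈ U) := by
    intro Z _ z U hU
    constructor
    · rintro ⟨w, hw, hwU⟩
      rcases mem_closure_iff.mp hw U hU hwU with ⟨v, hvU, hv⟩
      rwa [mem_singleton_iff.mp hv] at hvU
    · intro hz
      exact ⟨z, subset_closure rfl, hz⟩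
  -- closures of singletons are closed K-sets
  have hmemK : ∀ y : Y, closure ({y} : Set Y) ∈ KSets K Y := by
    intro y
    refine ⟨isClosed_closure, ⟨y, subset_closure rfl⟩, ?_⟩
    intro Z _ hZ h hh
    have hT0 : T0Space Z := hKT0 Z hZ
    refine ⟨h y, ?_, ?_⟩
    · rw [closure_image_closure hh, image_singleton]
    · intro z hz
      rw [closure_image_closure hh, image_singleton] at hz
      exact (inseparable_iff_closure_eq.mpr hz.symm).eq
  -- every closed K-set of Y is the closure of a unique point
  have hsurj : ∀ A : Set Y, A ∈ KSets K Y → ∃ y : Y, A = closure ({y} : Set Y) := by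
    rintro A ⟨hAc, hAne, hAK⟩
    obtain ⟨x, hx, -⟩ := hAK X hX g hg
    refine ⟨f x, ?_⟩
    have h1 : A = closure (f '' (g '' A)) := by
      rw [← image_comp, hfg, image_id, hAc.closure_eq]
    have h2 : closure (f '' (g '' A)) = closure ({f x} : Set Y) := by
      rw [← closure_image_closure hf, hx, closure_image_closure hf, image_singleton]
    rw [h1, h2]
  -- the map y ↦ cl {y} into P_H(K(Y))
  let e : Y → PH (KSets K Y) := fun y => ⟨closure ({y} : Set Y), hmemK y⟩
  have einj : Function.Injective e := by
    intro a b hab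
    have : closure ({a} : Set Y) = closure ({b} : Set Y) := congrArg PH.toSet hab
    exact (inseparable_iff_closure_eq.mpr this).eq
  have esurj : Function.Surjective e := by
    rintro ⟨A, hA⟩
    obtain ⟨y, hy⟩ := hsurj A hA
    exact ⟨y, by simp [e, ← hy]⟩
  have econt : Continuous e := by
    rw [continuous_generateFrom_iff]
    rintro V ⟨U, hU, rfl⟩
    have : e ⁻¹' {A : PH (KSets K Y) | (A.toSet ∩ U).Nonempty} = U := by
      ext y
      exact hmeet y U hU
    rw [this]; exact hU
  have eopen : IsOpenMap e := by
    intro U hU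
    have : e '' U = {A : PH (KSets K Y) | (A.toSet ∩ U).Nonempty} := by
      ext A
      constructor
      · rintro ⟨y, hyU, rfl⟩
        exact (hmeet y U hU).mpr hyU
      · intro hA
        obtain ⟨y, rfl⟩ := esurj A
        exact ⟨y, (hmeet y U hU).mp hA, rfl⟩
    rw [this]
    exact isOpen_generateFrom_of_mem ⟨U, hU, rfl⟩
  let h : Y ≃ₜ PH (KSets K Y) :=
    Equiv.toHomeomorphOfContinuousOpen (Equiv.ofBijective e ⟨einj, esurj⟩) econt eopen
  exact hHomeo (PH (KSets K Y)) Y (hAd Y inferInstance) ⟨h.symm⟩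
end

section
/- Suppose K is adequate and closed with respect to homeomorphisms. Then for any family {Xᵢ : i ∈ I} of nonempty T0 spaces, the product space ∏_{i∈I} Xᵢ is a K-space if and only if each Xᵢ is a K-space. -/
open Set Topology TopologicalSpace

universe u

section Aux

variable (K : (Y : Type u) → [inst : TopologicalSpace Y] → Prop)

/-- closures of points are K-sets (needs that K-spaces are T0). -/
lemma aux_isKSet_singleton_closure
    (hKT0 : ∀ (Y : Type u) [TopologicalSpace Y], K Y → T0Space Y)
    {X : Type u} [TopologicalSpace X] (x : X) : IsKSet K (closure {x}) := by
  refine ⟨⟨x, subset_closure rfl⟩, fun Y _ hY f hf => ?_⟩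
  haveI := hKT0 Y hY
  refine ⟨f x, by rw [closure_image_closure hf, image_singleton], fun y hy => ?_⟩
  rw [closure_image_closure hf, image_singleton] at hy
  exact ((inseparable_iff_closure_eq.2 hy).eq).symm

lemma aux_isKSet_image {X Z : Type u} [TopologicalSpace X] [TopologicalSpace Z]
    {A : Set X} (hA : IsKSet K A) {g : X → Z} (hg : Continuous g) : IsKSet K (g '' A) := by
  refine ⟨hA.1.image g, fun Y _ hY f hf => ?_⟩
  have := hA.2 Y hY (f ∘ g) (hf.comp hg)
  simpa [image_image] using this

lemma aux_isKSet_closure {X : Type u} [TopologicalSpace X]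
    {A : Set X} (hA : IsKSet K A) : IsKSet K (closure A) := by
  refine ⟨hA.1.mono subset_closure, fun Y _ hY f hf => ?_⟩
  rw [closure_image_closure hf]
  exact hA.2 Y hY f hf

/-- Key characterization: a T0 space is a K-space iff every closed K-set has a generic point. -/
lemma aux_kspace_iff
    (hKT0 : ∀ (Y : Type u) [TopologicalSpace Y], K Y → T0Space Y)
    (hAd : ∀ (Z : Type u) [TopologicalSpace Z], T0Space Z → K (PH (KSets K Z)))
    (hHomeo : ∀ (Y Z : Type u) [TopologicalSpace Y] [TopologicalSpace Z],
      K Y → Nonempty (Y ≃ₜ Z) → K Z)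
    (X : Type u) [TopologicalSpace X] [T0Space X] :
    K X ↔ ∀ A ∈ KSets K X, ∃ x : X, A = closure {x} := by
  constructor
  · intro hKX A hA
    obtain ⟨hAc, -, hAK⟩ := hA
    obtain ⟨y, hy, -⟩ := hAK X hKX id continuous_id
    exact ⟨y, by simpa [hAc.closure_eq] using hy⟩
  · intro h
    have hmem : ∀ x : X, closure ({x} : Set X) ∈ KSets K X :=
      fun x => ⟨isClosed_closure, aux_isKSet_singleton_closure K hKT0 x⟩
    let e : X → PH (KSets K X) := fun x => ⟨closure {x}, hmem x⟩
    have key : ∀ (x : X) (U : Set X), IsOpen U →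
        ((closure ({x} : Set X) ∩ U).Nonempty ↔ x ∈ U) := by
      intro x U hU
      constructor
      · rintro ⟨y, hyc, hyU⟩
        rcases mem_closure_iff.1 hyc U hU hyU with ⟨z, hzU, hz⟩
        rwa [← (show z = x from hz)]
      · exact fun hx => ⟨x, subset_closure rfl, hx⟩
    have hinj : Function.Injective e := by
      intro a b hab
      have : closure ({a} : Set X) = closure {b} := congrArg PH.toSet hab
      exact (inseparable_iff_closure_eq.2 this).eq
    have hsurj : Function.Surjective e := by
      rintro ⟨A, hA⟩
      obtain ⟨x, hx⟩ := h A hA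
      exact ⟨x, by simp only [e]; congr 1; exact hx.symm⟩
    have hcont : Continuous e := by
      rw [continuous_generateFrom_iff]
      rintro V ⟨U, hU, rfl⟩
      have : e ⁻¹' {A : PH (KSets K X) | (A.toSet ∩ U).Nonempty} = U := by
        ext x; exact key x U hU
      rw [this]; exact hU
    have hopen : IsOpenMap e := by
      intro U hU
      have : e '' U = {A : PH (KSets K X) | (A.toSet ∩ U).Nonempty} := by
        ext A
        constructor
        · rintro ⟨x, hxU, rfl⟩
          exact (key x U hU).2 hxU
        · intro hA
          obtain ⟨x, rfl⟩ := hsurj A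
          exact ⟨x, (key x U hU).1 hA, rfl⟩
      rw [this]
      exact isOpen_generateFrom_of_mem ⟨U, hU, rfl⟩
    have homeo : X ≃ₜ PH (KSets K X) :=
      Equiv.toHomeomorphOfContinuousOpen (Equiv.ofBijective e ⟨hinj, hsurj⟩) hcont hopen
    exact hHomeo (PH (KSets K X)) X (hAd X ‹T0Space X›) ⟨homeo.symm⟩

/-- Any finite space is quasi-sober. -/
lemma aux_finite_quasiSober (Y : Type u) [TopologicalSpace Y] [Finite Y] : QuasiSober Y := by
  constructor
  intro S hS hSc
  classical
  have hfin : ((fun y : Y => closure ({y} : Set Y)) '' S).Finite :=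
    (Set.toFinite S).image _
  obtain ⟨Z, hZcl, hZ⟩ := isIrreducible_iff_sUnion_isClosed.1 hS hfin.toFinset
    (by
      intro z hz
      rw [Set.Finite.mem_toFinset] at hz
      obtain ⟨y, -, rfl⟩ := hz
      exact isClosed_closure)
    (by
      intro y hy
      rw [Set.Finite.coe_toFinset]
      exact ⟨closure {y}, ⟨y, hy, rfl⟩, subset_closure rfl⟩)
  rw [Set.Finite.mem_toFinset] at hZcl
  obtain ⟨x, hxS, rfl⟩ := hZcl
  exact ⟨x, le_antisymm (hSc.closure_subset_iff.2 (singleton_subset_iff.2 hxS)) hZ⟩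

instance : T0Space Prop := by
  refine ⟨fun p q h => ?_⟩
  exact propext (h.mem_open_iff (s := {r : Prop | r}) (continuous_Prop.mp continuous_id))

/-- K-sets are irreducible. -/
lemma aux_isKSet_irreducible
    (hKT0 : ∀ (Y : Type u) [TopologicalSpace Y], K Y → T0Space Y)
    (hKsob : ∀ (Y : Type u) [TopologicalSpace Y], T0Space Y → QuasiSober Y → K Y)
    {X : Type u} [TopologicalSpace X] {A : Set X} (hA : IsKSet K A) : IsIrreducible A := by
  refine ⟨hA.1, fun U V hU hV hAU hAV => ?_⟩
  let Y := ULift.{u} Prop × ULift.{u} Prop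
  have hKY : K Y := hKsob Y inferInstance (aux_finite_quasiSober Y)
  let f : X → Y := fun x => (⟨x ∈ U⟩, ⟨x ∈ V⟩)
  have hf : Continuous f := by
    refine Continuous.prodMk ?_ ?_
    · exact continuous_uliftUp.comp (continuous_Prop.mpr hU)
    · exact continuous_uliftUp.comp (continuous_Prop.mpr hV)
  obtain ⟨y, hy, -⟩ := hA.2 Y hKY f hf
  have hPropOpen : IsOpen {r : Prop | r} := continuous_Prop.mp continuous_id
  have hW1 : IsOpen {p : Y | p.1.down} :=
    hPropOpen.preimage (continuous_uliftDown.comp continuous_fst)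
  have hW2 : IsOpen {p : Y | p.2.down} :=
    hPropOpen.preimage (continuous_uliftDown.comp continuous_snd)
  -- y lies in W1
  have hy1 : y ∈ {p : Y | p.1.down} := by
    obtain ⟨a, haA, haU⟩ := hAU
    have hfa : f a ∈ closure ({y} : Set Y) := hy ▸ subset_closure ⟨a, haA, rfl⟩
    obtain ⟨z, hz1, hz2⟩ := mem_closure_iff.1 hfa _ hW1 haU
    rwa [hz2] at hz1
  have hy2 : y ∈ {p : Y | p.2.down} := by
    obtain ⟨a, haA, haV⟩ := hAV
    have hfa : f a ∈ closure ({y} : Set Y) := hy ▸ subset_closure ⟨a, haA, rfl⟩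
    obtain ⟨z, hz1, hz2⟩ := mem_closure_iff.1 hfa _ hW2 haV
    rwa [hz2] at hz1
  have hyA : y ∈ closure (f '' A) := by rw [hy]; exact subset_closure rfl
  obtain ⟨z, hzW, hzA⟩ := mem_closure_iff.1 hyA _ (hW1.inter hW2) ⟨hy1, hy2⟩
  obtain ⟨a, haA, rfl⟩ := hzA
  exact ⟨a, haA, hzW.1, hzW.2⟩

end Aux

theorem prod_kSpace_iff_forall_kSpace
    (K : (Y : Type u) → [inst : TopologicalSpace Y] → Prop)
    (hKT0 : ∀ (Y : Type u) [TopologicalSpace Y], K Y → T0Space Y)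
    (hKsob : ∀ (Y : Type u) [TopologicalSpace Y], T0Space Y → QuasiSober Y → K Y)
    (hAd : ∀ (Z : Type u) [TopologicalSpace Z], T0Space Z → K (PH (KSets K Z)))
    (hHomeo : ∀ (Y Z : Type u) [TopologicalSpace Y] [TopologicalSpace Z],
      K Y → Nonempty (Y ≃ₜ Z) → K Z)
    (I : Type u) (Xs : I → Type u)
    [∀ i, TopologicalSpace (Xs i)] [∀ i, T0Space (Xs i)] [∀ i, Nonempty (Xs i)] :
    K (∀ i, Xs i) ↔ ∀ i : I, K (Xs i) := by
  classical
  constructor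
  · -- each factor is a retract of the product
    intro hKP i
    rw [aux_kspace_iff K hKT0 hAd hHomeo]
    rintro A ⟨hAc, hAK⟩
    let s : Xs i → ∀ j, Xs j := fun x => Function.update (fun j => Classical.arbitrary (Xs j)) i x
    have hs : Continuous s := continuous_const.update i continuous_id
    have hrs : ∀ x, (s x) i = x := fun x => Function.update_self i x _
    have hBK : IsKSet K (s '' A) := aux_isKSet_image K hAK hs
    obtain ⟨z, hz, -⟩ := hBK.2 (∀ j, Xs j) hKP id continuous_id
    rw [image_id] at hz
    refine ⟨z i, le_antisymm ?_ ?_⟩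
    · -- A ⊆ closure {z i}
      intro a ha
      have h1 : s a ∈ closure ({z} : Set (∀ j, Xs j)) := hz ▸ subset_closure ⟨a, ha, rfl⟩
      have h2 : (s a) i ∈ closure ({z i} : Set (Xs i)) := by
        have := (image_closure_subset_closure_image (continuous_apply i)) ⟨s a, h1, rfl⟩
        simpa using this
      rwa [hrs a] at h2
    · -- closure {z i} ⊆ A
      show closure {z i} ⊆ A
      rw [hAc.closure_subset_iff, singleton_subset_iff]
      have hzc : z ∈ closure (s '' A) := by rw [hz]; exact subset_closure rfl
      have : z i ∈ closure ((fun g : ∀ j, Xs j => g i) '' (s '' A)) :=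
        (image_closure_subset_closure_image (continuous_apply i)) ⟨z, hzc, rfl⟩
      have heq : (fun g : ∀ j, Xs j => g i) '' (s '' A) = A := by
        rw [image_image]
        simp only [hrs, image_id']
      rwa [heq, hAc.closure_eq] at this
  · intro hK
    rw [aux_kspace_iff K hKT0 hAd hHomeo]
    rintro A ⟨hAc, hAK⟩
    have hirr : IsIrreducible A := aux_isKSet_irreducible K hKT0 hKsob hAK
    have hgen : ∀ i, ∃ xi : Xs i, closure ((fun g : ∀ j, Xs j => g i) '' A) = closure {xi} := by
      intro i
      have hBK : IsKSet K (closure ((fun g : ∀ j, Xs j => g i) '' A)) :=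
        aux_isKSet_closure K (aux_isKSet_image K hAK (continuous_apply i))
      obtain ⟨y, hy, -⟩ := hBK.2 (Xs i) (hK i) id continuous_id
      rw [image_id, closure_closure] at hy
      exact ⟨y, hy⟩
    choose x hx using hgen
    refine ⟨x, le_antisymm ?_ ?_⟩
    · -- A ⊆ closure {x}
      intro a ha
      have : closure ({x} : Set (∀ i, Xs i)) = univ.pi fun i => closure {x i} := by
        rw [← Set.univ_pi_singleton x, closure_pi_set]
      rw [this]
      intro i _
      have : a i ∈ closure ((fun g : ∀ j, Xs j => g i) '' A) := subset_closure ⟨a, ha, rfl⟩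
      rwa [hx i] at this
    · -- x ∈ A
      show closure {x} ⊆ A
      rw [hAc.closure_subset_iff, singleton_subset_iff, ← hAc.closure_eq]
      rw [mem_closure_iff_nhds]
      intro t ht
      rw [nhds_pi, Filter.mem_pi] at ht
      obtain ⟨I₀, hI₀, ts, hts, hsub⟩ := ht
      have hUex : ∀ i, ∃ U : Set (Xs i), U ⊆ ts i ∧ IsOpen U ∧ x i ∈ U := fun i =>
        mem_nhds_iff.1 (hts i)
      choose Us hUsub hUo hUx using hUex
      set F : Finset (Set (∀ j, Xs j)) :=
        (hI₀.toFinset).image (fun i => (fun g : ∀ j, Xs j => g i) ⁻¹' Us i) with hF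
      have hmeet := isIrreducible_iff_sInter.1 hirr F
        (by
          intro u hu
          rw [hF, Finset.mem_image] at hu
          obtain ⟨i, -, rfl⟩ := hu
          exact (hUo i).preimage (continuous_apply i))
        (by
          intro u hu
          rw [hF, Finset.mem_image] at hu
          obtain ⟨i, -, rfl⟩ := hu
          have hxi : x i ∈ closure ((fun g : ∀ j, Xs j => g i) '' A) := by
            rw [hx i]; exact subset_closure rfl
          obtain ⟨z, hz1, a, ha, rfl⟩ := mem_closure_iff.1 hxi _ (hUo i) (hUx i)
          exact ⟨a, ha, hz1⟩)
      obtain ⟨a, haA, haI⟩ := hmeet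
      refine ⟨a, hsub ?_, haA⟩
      intro i hi
      have : a ∈ (fun g : ∀ j, Xs j => g i) ⁻¹' Us i := by
        apply haI
        rw [hF, Finset.coe_image]
        exact ⟨i, hI₀.mem_toFinset.2 hi, rfl⟩
      exact hUsub i this
end

section
/- Suppose K is adequate, and let X be a T0 space with K-reflection X^k = P_H(K(X)). The following are equivalent: (1) X^k together with η_X is the sobrification of X; (2) X^k is sober; (3) K(X) = Irr_c(X), i.e., every irreducible closed subset of X is a K-set. -/
open Set Topology TopologicalSpace

universe u

namespace PHAux

variable {X : Type u} [TopologicalSpace X] {G : Set (Set X)}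

lemma PH.ext' {A B : PH G} (h : A.toSet = B.toSet) : A = B := by
  cases A; cases B; simpa using h

lemma isOpen_diamond {U : Set X} (hU : IsOpen U) :
    IsOpen {A : PH G | (A.toSet ∩ U).Nonempty} :=
  isOpen_generateFrom_of_mem ⟨U, hU, rfl⟩

/-- If `D` meets every open set that `C` meets, then every open set of the lower Vietoris
topology containing `C` contains `D`. -/
lemma mem_open_mono {C D : PH G}
    (h : ∀ U : Set X, IsOpen U → (C.toSet ∩ U).Nonempty → (D.toSet ∩ U).Nonempty)
    {W : Set (PH G)} (hW : IsOpen W) (hC : C ∈ W) : D ∈ W := by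
  have hW' : TopologicalSpace.GenerateOpen
      {V : Set (PH G) | ∃ U : Set X, IsOpen U ∧ V = {A : PH G | (A.toSet ∩ U).Nonempty}} W := hW
  clear hW
  revert hC
  induction hW' with
  | basic V hV =>
    obtain ⟨U, hU, rfl⟩ := hV
    exact fun hC => h U hU hC
  | univ => exact fun _ => trivial
  | inter W₁ W₂ h₁ h₂ IH₁ IH₂ => exact fun hC => ⟨IH₁ hC.1, IH₂ hC.2⟩
  | sUnion S hS IH =>
    rintro ⟨W', hW', hCW'⟩
    exact ⟨W', hW', IH W' hW' hCW'⟩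

lemma mem_closure_singleton_of_subset {C B : PH G} (h : C.toSet ⊆ B.toSet) :
    C ∈ closure ({B} : Set (PH G)) := by
  rw [mem_closure_iff]
  intro W hW hCW
  exact ⟨B, mem_open_mono (fun U _ hne => hne.mono (inter_subset_inter_left U h)) hW hCW, rfl⟩

/-- If all members of `D` are contained in a closed set `A`, then so is every member of the
closure of `D`. -/
lemma subset_of_mem_closure {D : Set (PH G)} {A : Set X} (hA : IsClosed A)
    (hD : ∀ E ∈ D, E.toSet ⊆ A) {C : PH G} (hC : C ∈ closure D) : C.toSet ⊆ A := by
  by_contra hsub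
  obtain ⟨x, hxC, hxA⟩ := not_subset.mp hsub
  rw [mem_closure_iff] at hC
  obtain ⟨E, hE1, hE2⟩ := hC _ (isOpen_diamond hA.isOpen_compl) ⟨x, hxC, hxA⟩
  obtain ⟨y, hy1, hy2⟩ := hE1
  exact hy2 (hD E hE2 hy1)

/-- An irreducible closed set whose union-closure condition holds lies in the closure of `𝒜`. -/
lemma mem_closure_of_meets {𝒜 : Set (PH G)} (h𝒜 : IsIrreducible 𝒜) {C : PH G}
    (hC : ∀ U : Set X, IsOpen U → (C.toSet ∩ U).Nonempty → ∃ D ∈ 𝒜, (D.toSet ∩ U).Nonempty) :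
    C ∈ closure 𝒜 := by
  rw [mem_closure_iff]
  intro W hW hCW
  have hW' : TopologicalSpace.GenerateOpen
      {V : Set (PH G) | ∃ U : Set X, IsOpen U ∧ V = {A : PH G | (A.toSet ∩ U).Nonempty}} W := hW
  clear hW
  revert hCW
  induction hW' with
  | basic V hV =>
    obtain ⟨U, hU, rfl⟩ := hV
    intro hCW
    obtain ⟨D, hD, hDU⟩ := hC U hU hCW
    exact ⟨D, hDU, hD⟩
  | univ => exact fun _ => h𝒜.nonempty.imp fun D hD => ⟨trivial, hD⟩
  | inter W₁ W₂ h₁ h₂ IH₁ IH₂ =>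
    intro hCW
    have n₁ := IH₁ hCW.1
    have n₂ := IH₂ hCW.2
    have := h𝒜.2 W₁ W₂ (by exact h₁) (by exact h₂)
      (n₁.mono fun z hz => ⟨hz.2, hz.1⟩) (n₂.mono fun z hz => ⟨hz.2, hz.1⟩)
    exact this.mono fun z hz => ⟨hz.2, hz.1⟩
  | sUnion S hS IH =>
    rintro ⟨W', hW', hCW'⟩
    exact (IH W' hW' hCW').mono fun z hz => ⟨⟨W', hW', hz.1⟩, hz.2⟩

/-- The sobrification `P_H(Irr_c(X))` is T0. -/
lemma t0_sobrification : T0Space (PH {A : Set X | IsClosed A ∧ IsIrreducible A}) := by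
  refine ⟨fun {B C} h => PH.ext' (subset_antisymm ?_ ?_)⟩
  · exact subset_of_mem_closure C.mem.1 (fun E hE => by rw [show E = C from hE])
      h.specializes'.mem_closure
  · exact subset_of_mem_closure B.mem.1 (fun E hE => by rw [show E = B from hE])
      h.specializes.mem_closure

/-- The sobrification `P_H(Irr_c(X))` is quasi-sober (hence sober). -/
lemma quasiSober_sobrification :
    QuasiSober (PH {A : Set X | IsClosed A ∧ IsIrreducible A}) := by
  constructor
  intro 𝒜 h𝒜 hcl
  set A₀ : Set X := closure (⋃ C ∈ 𝒜, PH.toSet C) with hA₀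
  have hmeet : ∀ U : Set X, IsOpen U → (A₀ ∩ U).Nonempty →
      ∃ D ∈ 𝒜, (D.toSet ∩ U).Nonempty := by
    intro U hU ⟨x, hx1, hx2⟩
    obtain ⟨y, hyU, hy⟩ := mem_closure_iff.mp hx1 U hU hx2
    obtain ⟨s, ⟨D, rfl⟩, hys⟩ := hy
    simp only [Set.mem_iUnion] at hys
    obtain ⟨hD, hyD⟩ := hys
    exact ⟨D, hD, y, hyD, hyU⟩
  have hirr : IsIrreducible A₀ := by
    constructor
    · obtain ⟨C, hC⟩ := h𝒜.nonempty
      obtain ⟨x, hx⟩ := C.mem.2.nonempty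
      exact ⟨x, subset_closure (Set.mem_biUnion hC hx)⟩
    · intro U V hU hV hUne hVne
      obtain ⟨D₁, hD₁, hD₁U⟩ := hmeet U hU hUne
      obtain ⟨D₂, hD₂, hD₂V⟩ := hmeet V hV hVne
      have h1 : (𝒜 ∩ {A : PH _ | (A.toSet ∩ U).Nonempty}).Nonempty := ⟨D₁, hD₁, hD₁U⟩
      have h2 : (𝒜 ∩ {A : PH _ | (A.toSet ∩ V).Nonempty}).Nonempty := ⟨D₂, hD₂, hD₂V⟩
      obtain ⟨D, hD, hDU, hDV⟩ := h𝒜.2 _ _ (isOpen_diamond hU) (isOpen_diamond hV) h1 h2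
      obtain ⟨z, hz⟩ := D.mem.2.2 U V hU hV hDU hDV
      refine ⟨z, ?_, hz.2⟩
      exact subset_closure (Set.mem_biUnion hD hz.1)
  refine ⟨⟨A₀, isClosed_closure, hirr⟩, subset_antisymm ?_ ?_⟩
  · intro C hC
    have hsub : C.toSet ⊆ A₀ :=
      subset_of_mem_closure isClosed_closure (by rintro E rfl; exact subset_rfl) hC
    have : C ∈ closure 𝒜 := mem_closure_of_meets h𝒜 fun U hU hne =>
      hmeet U hU (hne.mono (inter_subset_inter_left U hsub))
    rwa [hcl.closure_eq] at this
  · intro C hC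
    exact mem_closure_singleton_of_subset
      ((Set.subset_biUnion_of_mem hC).trans subset_closure)

lemma closure_singleton_mem_KSets (K : (Y : Type u) → [inst : TopologicalSpace Y] → Prop)
    (hKT0 : ∀ (Y : Type u) [TopologicalSpace Y], K Y → T0Space Y) (x : X) :
    closure ({x} : Set X) ∈ KSets K X := by
  refine ⟨isClosed_closure, ⟨x, subset_closure rfl⟩, ?_⟩
  intro Y _ hY f hf
  haveI := hKT0 Y hY
  have heq : closure (f '' closure ({x} : Set X)) = closure ({f x} : Set Y) := by
    apply subset_antisymm
    · refine closure_minimal ?_ isClosed_closure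
      have h1 := image_closure_subset_closure_image (s := ({x} : Set X)) hf
      rwa [Set.image_singleton] at h1
    · exact closure_mono (Set.singleton_subset_iff.mpr ⟨x, subset_closure rfl, rfl⟩)
  refine ⟨f x, heq, fun y hy => ?_⟩
  exact (inseparable_iff_closure_eq.mpr (hy.symm.trans heq)).eq

lemma continuous_eta {G : Set (Set X)} (hG : ∀ x : X, closure ({x} : Set X) ∈ G) :
    Continuous (fun x => (⟨closure {x}, hG x⟩ : PH G)) := by
  refine continuous_def.mpr fun W hW => ?_
  have hW' : TopologicalSpace.GenerateOpen
      {V : Set (PH G) | ∃ U : Set X, IsOpen U ∧ V = {A : PH G | (A.toSet ∩ U).Nonempty}} W := hW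
  clear hW
  induction hW' with
  | basic V hV =>
    obtain ⟨U, hU, rfl⟩ := hV
    have : (fun x => (⟨closure {x}, hG x⟩ : PH G)) ⁻¹' {A : PH G | (A.toSet ∩ U).Nonempty} = U := by
      ext x
      simp only [Set.mem_preimage, Set.mem_setOf_eq]
      constructor
      · rintro ⟨y, hyc, hyU⟩
        obtain ⟨z, hzU, hzx⟩ := mem_closure_iff.mp hyc U hU hyU
        exact hzx ▸ hzU
      · intro hx
        exact ⟨x, subset_closure rfl, hx⟩
    rw [this]; exact hU
  | univ => exact isOpen_univ
  | inter W₁ W₂ h₁ h₂ IH₁ IH₂ => exact IH₁.inter IH₂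
  | sUnion S hS IH =>
    rw [Set.preimage_sUnion]
    exact isOpen_biUnion IH

end PHAux

/-- Transport of `P_H` along an equality of families. -/
def PHcongr {X : Type u} [TopologicalSpace X] {G G' : Set (Set X)} (h : G = G') :
    PH G ≃ₜ PH G' := by subst h; exact Homeomorph.refl _

lemma PHcongr_toSet {X : Type u} [TopologicalSpace X] {G G' : Set (Set X)} (h : G = G')
    (A : PH G) : (PHcongr h A).toSet = A.toSet := by subst h; rfl

theorem K_reflection_sober_iff_KSets_eq_Irrc
    (K : (Y : Type u) → [inst : TopologicalSpace Y] → Prop)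
    (hKT0 : ∀ (Y : Type u) [TopologicalSpace Y], K Y → T0Space Y)
    (hKsob : ∀ (Y : Type u) [TopologicalSpace Y], T0Space Y → QuasiSober Y → K Y)
    (hAd : ∀ (Z : Type u) [TopologicalSpace Z], T0Space Z → K (PH (KSets K Z)))
    (X : Type u) [TopologicalSpace X] [T0Space X] :
    ((∃ h : PH (KSets K X) ≃ₜ PH {A : Set X | IsClosed A ∧ IsIrreducible A},
        ∀ A : PH (KSets K X), (h A).toSet = A.toSet) ↔
      T0Space (PH (KSets K X)) ∧ QuasiSober (PH (KSets K X))) ∧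
      ((T0Space (PH (KSets K X)) ∧ QuasiSober (PH (KSets K X))) ↔
        KSets K X = {A : Set X | IsClosed A ∧ IsIrreducible A}) := by
  have hT0irr : T0Space (PH {A : Set X | IsClosed A ∧ IsIrreducible A}) := PHAux.t0_sobrification
  have hQSirr : QuasiSober (PH {A : Set X | IsClosed A ∧ IsIrreducible A}) :=
    PHAux.quasiSober_sobrification
  have hKY : K (PH {A : Set X | IsClosed A ∧ IsIrreducible A}) := hKsob _ hT0irr hQSirr
  have hGirr : ∀ x : X, closure ({x} : Set X) ∈ {A : Set X | IsClosed A ∧ IsIrreducible A} :=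
    fun x => ⟨isClosed_closure, isIrreducible_singleton.closure⟩
  have hGk : ∀ x : X, closure ({x} : Set X) ∈ KSets K X :=
    PHAux.closure_singleton_mem_KSets K hKT0
  have key : T0Space (PH (KSets K X)) → QuasiSober (PH (KSets K X)) →
      KSets K X = {A : Set X | IsClosed A ∧ IsIrreducible A} := by
    intro h0 hq
    ext A
    constructor
    · rintro ⟨hAc, hAne, hAK⟩
      refine ⟨hAc, ?_⟩
      obtain ⟨y, hy, -⟩ := hAK _ hKY (fun x => ⟨closure {x}, hGirr x⟩) (PHAux.continuous_eta hGirr)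
      have hDsub : ∀ E ∈ (fun x =>
          (⟨closure {x}, hGirr x⟩ : PH {A : Set X | IsClosed A ∧ IsIrreducible A})) '' A,
          PH.toSet E ⊆ A := by
        rintro E ⟨x, hx, rfl⟩
        exact closure_minimal (Set.singleton_subset_iff.mpr hx) hAc
      have hyA : y.toSet ⊆ A := PHAux.subset_of_mem_closure hAc hDsub
        (hy ▸ subset_closure (Set.mem_singleton y))
      have hAy : A ⊆ y.toSet := by
        intro x hx
        have h1 : (⟨closure {x}, hGirr x⟩ : PH {A : Set X | IsClosed A ∧ IsIrreducible A}) ∈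
            closure {y} := hy ▸ subset_closure (Set.mem_image_of_mem _ hx)
        have h2 : closure ({x} : Set X) ⊆ y.toSet :=
          PHAux.subset_of_mem_closure y.mem.1 (fun E hE => by rw [show E = y from hE]) h1
        exact h2 (subset_closure rfl)
      have hA : A = y.toSet := subset_antisymm hAy hyA
      rw [hA]; exact y.mem.2
    · rintro ⟨hAc, hAirr⟩
      have hirr : IsIrreducible
          (closure ((fun x => (⟨closure {x}, hGk x⟩ : PH (KSets K X))) '' A)) :=
        (hAirr.image _ (PHAux.continuous_eta hGk).continuousOn).closure
      obtain ⟨B, hB⟩ := hq.sober hirr isClosed_closure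
      have hDsub : ∀ E ∈ (fun x => (⟨closure {x}, hGk x⟩ : PH (KSets K X))) '' A,
          PH.toSet E ⊆ A := by
        rintro E ⟨x, hx, rfl⟩
        exact closure_minimal (Set.singleton_subset_iff.mpr hx) hAc
      have h1 : B.toSet ⊆ A := PHAux.subset_of_mem_closure hAc hDsub hB.mem
      have h2 : A ⊆ B.toSet := by
        intro x hx
        have hx1 : (⟨closure {x}, hGk x⟩ : PH (KSets K X)) ∈ closure {B} := by
          rw [hB]
          exact subset_closure
            (Set.mem_image_of_mem (fun x => (⟨closure {x}, hGk x⟩ : PH (KSets K X))) hx)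
        have h3 : closure ({x} : Set X) ⊆ B.toSet :=
          PHAux.subset_of_mem_closure B.mem.1 (fun E hE => by rw [show E = B from hE]) hx1
        exact h3 (subset_closure rfl)
      have hA : A = B.toSet := subset_antisymm h2 h1
      rw [hA]; exact B.mem
  constructor
  · constructor
    · rintro ⟨h, -⟩
      haveI := hT0irr
      haveI := hQSirr
      exact ⟨h.isEmbedding.t0Space, h.isOpenEmbedding.quasiSober⟩
    · rintro ⟨h0, hq⟩
      exact ⟨PHcongr (key h0 hq), fun A => PHcongr_toSet _ A⟩
  · constructor
    · rintro ⟨h0, hq⟩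
      exact key h0 hq
    · intro he
      constructor
      · rw [he]; exact hT0irr
      · rw [he]; exact hQSirr
end

section
/- Suppose K is adequate. Then a T0 space X is compact if and only if its K-reflection X^k = P_H(K(X)) is compact. -/
open Set Topology TopologicalSpace

universe u

theorem compactSpace_iff_compactSpace_PH_KSets
    (K : (Y : Type u) → [inst : TopologicalSpace Y] → Prop)
    (hKT0 : ∀ (Y : Type u) [TopologicalSpace Y], K Y → T0Space Y)
    (hKsob : ∀ (Y : Type u) [TopologicalSpace Y], T0Space Y → QuasiSober Y → K Y)
    (hAd : ∀ (Z : Type u) [TopologicalSpace Z], T0Space Z → K (PH (KSets K Z)))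
    (X : Type u) [TopologicalSpace X] [T0Space X] :
    CompactSpace X ↔ CompactSpace (PH (KSets K X)) := by

  classical
  -- `closure {x}` is a closed K-set, using only that K-spaces are T0
  have hmemK : ∀ x : X, closure ({x} : Set X) ∈ KSets K X := by
    intro x
    refine ⟨isClosed_closure, ⟨x, subset_closure rfl⟩, ?_⟩
    intro Y _ hKY f hf
    haveI : T0Space Y := hKT0 Y hKY
    have heq : closure (f '' closure ({x} : Set X)) = closure ({f x} : Set Y) := by
      apply subset_antisymm
      · have h1 : f '' closure ({x} : Set X) ⊆ closure (f '' {x}) :=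
          image_closure_subset_closure_image hf
        rw [image_singleton] at h1
        calc closure (f '' closure ({x} : Set X)) ⊆ closure (closure ({f x} : Set Y)) :=
              closure_mono h1
          _ = closure ({f x} : Set Y) := closure_closure
      · apply closure_mono
        rintro _ rfl
        exact ⟨x, subset_closure rfl, rfl⟩
    refine ⟨f x, heq, ?_⟩
    intro y hy
    exact (inseparable_iff_closure_eq.2 (hy.symm.trans heq)).eq
  set η : X → PH (KSets K X) := fun x => ⟨closure ({x} : Set X), hmemK x⟩ with hη
  -- the diamonds are open
  have hdiam : ∀ U : Set X, IsOpen U →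
      IsOpen {A : PH (KSets K X) | (A.toSet ∩ U).Nonempty} := by
    intro U hU
    exact isOpen_generateFrom_of_mem ⟨U, hU, rfl⟩
  -- the key equivalence: `closure {x}` meets an open `U` iff `x ∈ U`
  have hkey : ∀ (x : X) (U : Set X), IsOpen U →
      ((closure ({x} : Set X) ∩ U).Nonempty ↔ x ∈ U) := by
    intro x U hU
    constructor
    · rintro ⟨a, haC, haU⟩
      have := (mem_closure_iff.1 haC) U hU haU
      obtain ⟨b, hbU, hbx⟩ := this
      rw [mem_singleton_iff] at hbx
      rwa [hbx] at hbU
    · intro hxU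
      exact ⟨x, subset_closure rfl, hxU⟩
  -- η is continuous
  have hηcont : Continuous η := by
    apply continuous_generateFrom_iff.2
    rintro V ⟨U, hU, rfl⟩
    have : η ⁻¹' {A : PH (KSets K X) | (A.toSet ∩ U).Nonempty} = U := by
      ext x
      exact hkey x U hU
    rw [this]
    exact hU
  have hne : ∀ A : PH (KSets K X), A.toSet.Nonempty := fun A => A.mem.2.1
  constructor
  · -- forward: X compact ⇒ P_H compact
    intro hX
    rw [← isCompact_univ_iff]
    apply isCompact_of_finite_subcover
    intro ι V hV hcov
    have hbasis := isTopologicalBasis_of_subbasis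
      (rfl : (inferInstance : TopologicalSpace (PH (KSets K X))) = generateFrom
        {V : Set (PH (KSets K X)) | ∃ U : Set X, IsOpen U ∧
          V = {A : PH (KSets K X) | (A.toSet ∩ U).Nonempty}})
    have hchoice : ∀ x : X, ∃ i : ι, ∃ W : Set X, IsOpen W ∧ x ∈ W ∧
        ∀ A : PH (KSets K X), (A.toSet ∩ W).Nonempty → A ∈ V i := by
      intro x
      obtain ⟨i, hi⟩ := mem_iUnion.1 (hcov (mem_univ (η x)))
      obtain ⟨b, hb, hmemb, hbV⟩ := hbasis.exists_subset_of_mem_open hi (hV i)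
      obtain ⟨f, ⟨hffin, hfsub⟩, rfl⟩ := hb
      have hfopen : IsOpen (⋂₀ f) := by
        apply Set.Finite.isOpen_sInter hffin
        intro u hu
        obtain ⟨U, hU, rfl⟩ := hfsub hu
        exact hdiam U hU
      refine ⟨i, η ⁻¹' (⋂₀ f), hfopen.preimage hηcont, hmemb, ?_⟩
      rintro A ⟨a, haA, haW⟩
      apply hbV
      rw [mem_sInter]
      intro u hu
      obtain ⟨U, hU, rfl⟩ := hfsub hu
      have h2 : (closure ({a} : Set X) ∩ U).Nonempty := haW _ hu
      exact ⟨a, haA, (hkey a U hU).1 h2⟩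
    choose i W hWopen hxW hWV using hchoice
    obtain ⟨t, ht⟩ := isCompact_univ.elim_finite_subcover W hWopen
      (fun x _ => mem_iUnion.2 ⟨x, hxW x⟩)
    refine ⟨t.image i, fun A _ => ?_⟩
    obtain ⟨a, ha⟩ := hne A
    obtain ⟨x, hxt, haW⟩ := mem_iUnion₂.1 (ht (mem_univ a))
    exact mem_iUnion₂.2 ⟨i x, Finset.mem_image_of_mem i hxt, hWV x A ⟨a, ha, haW⟩⟩
  · -- backward: P_H compact ⇒ X compact
    intro hPH
    rw [← isCompact_univ_iff]
    apply isCompact_of_finite_subcover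
    intro ι U hU hcov
    have hcov' : (univ : Set (PH (KSets K X))) ⊆
        ⋃ i, {A : PH (KSets K X) | (A.toSet ∩ U i).Nonempty} := by
      intro A _
      obtain ⟨a, ha⟩ := hne A
      obtain ⟨j, hj⟩ := mem_iUnion.1 (hcov (mem_univ a))
      exact mem_iUnion.2 ⟨j, a, ha, hj⟩
    obtain ⟨t, ht⟩ := isCompact_univ.elim_finite_subcover _
      (fun j => hdiam (U j) (hU j)) hcov'
    refine ⟨t, fun x _ => ?_⟩
    obtain ⟨j, hjt, hx⟩ := mem_iUnion₂.1 (ht (mem_univ (η x)))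
    exact mem_iUnion₂.2 ⟨j, hjt, (hkey x (U j) (hU j)).1 hx⟩
end

section
/- Let K = Top_d be the class of all d-spaces. For every T0 space X, the space P_H(d(X)) is a d-space; consequently Top_d is adequate, and the pair (X^d = P_H(d(X)), η_X), where η_X(x) = cl{x}, is the d-reflection of X (for every continuous map f : X → Y to a d-space Y there is a unique continuous f* : X^d → Y with f* ∘ η_X = f). -/
open Set Topology TopologicalSpace

universe u

/-- `d(X)`: the nonempty closed sets `A ⊆ X` such that for every continuous map
`f : X → Y` to a d-space `Y` there is a unique `y` with `closure (f '' A) = closure {y}`. -/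
def dSets (X : Type u) [TopologicalSpace X] : Set (Set X) :=
  {A : Set X | IsClosed A ∧ A.Nonempty ∧
    ∀ (Y : Type u) [TopologicalSpace Y], IsDSpace Y →
      ∀ f : X → Y, Continuous f → ∃! y : Y, closure (f '' A) = closure ({y} : Set Y)}

section Aux

variable {X : Type u} [TopologicalSpace X]

theorem PH.toSet_injective {G : Set (Set X)} {A B : PH G} (h : A.toSet = B.toSet) : A = B := by
  cases A; cases B; subst h; rfl

theorem isOpen_diamond {G : Set (Set X)} {U : Set X} (hU : IsOpen U) :
    IsOpen {A : PH G | (A.toSet ∩ U).Nonempty} :=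
  TopologicalSpace.GenerateOpen.basic _ ⟨U, hU, rfl⟩

theorem PH.generateOpen_of_isOpen {G : Set (Set X)} {V : Set (PH G)} (h : IsOpen V) :
    TopologicalSpace.GenerateOpen
      {V : Set (PH G) | ∃ U : Set X, IsOpen U ∧ V = {A : PH G | (A.toSet ∩ U).Nonempty}} V := h

theorem PH.isOpen_of_generateOpen {G : Set (Set X)} {V : Set (PH G)}
    (h : TopologicalSpace.GenerateOpen
      {V : Set (PH G) | ∃ U : Set X, IsOpen U ∧ V = {A : PH G | (A.toSet ∩ U).Nonempty}} V) :
    IsOpen V := h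

theorem specLE_self (x : X) : specLE x x := subset_closure (Set.mem_singleton x)

theorem closure_subset_of_specLE {x y : X} (h : specLE x y) :
    closure ({x} : Set X) ⊆ closure ({y} : Set X) :=
  closure_minimal (Set.singleton_subset_iff.mpr h) isClosed_closure

theorem specLE_of_closure_subset {x y : X}
    (h : closure ({x} : Set X) ⊆ closure ({y} : Set X)) : specLE x y :=
  h (subset_closure (Set.mem_singleton x))

theorem specLE_antisymm {Y : Type u} [TopologicalSpace Y] [T0Space Y] {x y : Y}
    (h1 : specLE x y) (h2 : specLE y x) : x = y := by
  have h : closure ({x} : Set Y) = closure ({y} : Set Y) :=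
    subset_antisymm (closure_subset_of_specLE h1) (closure_subset_of_specLE h2)
  exact (inseparable_iff_closure_eq.mpr h).eq

theorem specLE_map {Y : Type u} [TopologicalSpace Y] {f : X → Y} (hf : Continuous f)
    {a b : X} (h : specLE a b) : specLE (f a) (f b) := by
  have h1 : f a ∈ f '' closure ({b} : Set X) := ⟨a, h, rfl⟩
  have h2 := image_closure_subset_closure_image hf h1
  simpa [Set.image_singleton, specLE] using h2

theorem mem_of_specLE_of_isOpen {U : Set X} (hU : IsOpen U) {x y : X}
    (hx : x ∈ U) (h : specLE x y) : y ∈ U := by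
  by_contra hy
  have hsub : closure ({y} : Set X) ⊆ Uᶜ :=
    closure_minimal (Set.singleton_subset_iff.mpr hy) (isClosed_compl_iff.mpr hU)
  exact hsub h hx

theorem closure_inter_open_nonempty {S U : Set X} (hU : IsOpen U) :
    (closure S ∩ U).Nonempty ↔ (S ∩ U).Nonempty := by
  constructor
  · rintro ⟨x, hxc, hxU⟩
    obtain ⟨z, hzU, hzS⟩ := mem_closure_iff.mp hxc U hU hxU
    exact ⟨z, hzS, hzU⟩
  · rintro ⟨x, hxS, hxU⟩
    exact ⟨x, subset_closure hxS, hxU⟩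

theorem PH_open_mono {G : Set (Set X)} {A B : PH G} (hsub : A.toSet ⊆ B.toSet)
    {V : Set (PH G)} (hV : IsOpen V) (hA : A ∈ V) : B ∈ V := by
  induction PH.generateOpen_of_isOpen hV with
  | basic V hVmem =>
    obtain ⟨U, hU, rfl⟩ := hVmem
    obtain ⟨x, hxA, hxU⟩ := hA
    exact ⟨x, hsub hxA, hxU⟩
  | univ => trivial
  | inter V₁ V₂ h₁ h₂ ih₁ ih₂ =>
    exact ⟨ih₁ (PH.isOpen_of_generateOpen h₁) hA.1, ih₂ (PH.isOpen_of_generateOpen h₂) hA.2⟩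
  | sUnion S hS ih =>
    obtain ⟨t, htS, hAt⟩ := hA
    exact ⟨t, htS, ih t htS (PH.isOpen_of_generateOpen (hS t htS)) hAt⟩

theorem PH_specLE_iff {A B : PH (dSets X)} : specLE A B ↔ A.toSet ⊆ B.toSet := by
  constructor
  · intro h
    by_contra hsub
    obtain ⟨x, hxA, hxB⟩ := Set.not_subset.mp hsub
    have hV : IsOpen {C : PH (dSets X) | (C.toSet ∩ B.toSetᶜ).Nonempty} :=
      isOpen_diamond B.mem.1.isOpen_compl
    obtain ⟨C, hCo, hCB⟩ := mem_closure_iff.mp h _ hV ⟨x, hxA, hxB⟩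
    rw [Set.mem_singleton_iff] at hCB
    subst hCB
    obtain ⟨z, hz1, hz2⟩ := hCo
    exact hz2 hz1
  · intro hsub
    rw [show specLE A B ↔ A ∈ closure ({B} : Set (PH (dSets X))) from Iff.rfl,
      mem_closure_iff]
    intro o ho hAo
    exact ⟨B, PH_open_mono hsub ho hAo, rfl⟩

end Aux

section Main

variable {X : Type u} [TopologicalSpace X]

theorem directed_union_mem_dSets {D : Set (PH (dSets X))} (hD : SpecDirected D) :
    closure (⋃ A ∈ D, A.toSet) ∈ dSets X := by
  obtain ⟨⟨A₀, hA₀⟩, hdir⟩ := hD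
  refine ⟨isClosed_closure, ?_, ?_⟩
  · obtain ⟨x, hx⟩ := A₀.mem.2.1
    exact ⟨x, subset_closure (Set.mem_biUnion hA₀ hx)⟩
  · intro Y _ hY f hf
    obtain ⟨hT0, hdcpo, hscott⟩ := hY
    haveI := hT0
    set E : Set Y := {y | ∃ A ∈ D, closure (f '' A.toSet) = closure ({y} : Set Y)} with hE
    have hEdir : SpecDirected E := by
      constructor
      · obtain ⟨y₀, hy₀⟩ := (A₀.mem.2.2 Y ⟨hT0, hdcpo, hscott⟩ f hf).exists
        exact ⟨y₀, A₀, hA₀, hy₀⟩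
      · rintro a ⟨A, hAD, hAa⟩ b ⟨B, hBD, hBb⟩
        obtain ⟨C, hCD, hAC, hBC⟩ := hdir A hAD B hBD
        obtain ⟨c, hc⟩ := (C.mem.2.2 Y ⟨hT0, hdcpo, hscott⟩ f hf).exists
        have hkey : ∀ (P : PH (dSets X)), P ∈ D → specLE P C →
            ∀ y : Y, closure (f '' P.toSet) = closure ({y} : Set Y) → specLE y c := by
          intro P _ hPC y hy
          have h1 : y ∈ closure (f '' P.toSet) := by
            rw [hy]; exact subset_closure (Set.mem_singleton y)
          have h2 : closure (f '' P.toSet) ⊆ closure (f '' C.toSet) :=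
            closure_mono (Set.image_mono (PH_specLE_iff.mp hPC))
          rw [hc] at h2
          exact h2 h1
        exact ⟨c, ⟨C, hCD, hc⟩, hkey A hAD hAC a hAa, hkey B hBD hBC b hBb⟩
    obtain ⟨s, hs⟩ := hdcpo E hEdir
    have key : closure (f '' closure (⋃ A ∈ D, A.toSet)) = closure ({s} : Set Y) := by
      rw [closure_image_closure hf]
      apply subset_antisymm
      · apply closure_minimal _ isClosed_closure
        rintro _ ⟨x, hx, rfl⟩
        obtain ⟨A, hAD, hxA⟩ := Set.mem_iUnion₂.mp hx
        obtain ⟨yA, hyA⟩ := (A.mem.2.2 Y ⟨hT0, hdcpo, hscott⟩ f hf).exists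
        have h1 : f x ∈ closure ({yA} : Set Y) := by
          rw [← hyA]; exact subset_closure ⟨x, hxA, rfl⟩
        exact closure_subset_of_specLE (hs.1 yA ⟨A, hAD, hyA⟩) h1
      · apply closure_minimal _ isClosed_closure
        rw [Set.singleton_subset_iff, mem_closure_iff]
        intro U hU hsU
        obtain ⟨y, hyE, hyU⟩ := hscott U hU E hEdir s hs hsU
        obtain ⟨A, hAD, hyA⟩ := hyE
        have h1 : y ∈ closure (f '' A.toSet) := by
          rw [hyA]; exact subset_closure (Set.mem_singleton y)
        obtain ⟨z, hzU, hzf⟩ := mem_closure_iff.mp h1 U hU hyU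
        obtain ⟨x, hxA, rfl⟩ := hzf
        exact ⟨f x, hzU, ⟨x, Set.mem_biUnion hAD hxA, rfl⟩⟩
    refine ⟨s, key, ?_⟩
    intro y hy
    have h' : closure ({y} : Set Y) = closure ({s} : Set Y) := by rw [← hy, key]
    exact specLE_antisymm (specLE_of_closure_subset h'.subset)
      (specLE_of_closure_subset h'.superset)

theorem directed_union_isLUB {D : Set (PH (dSets X))} (hD : SpecDirected D) :
    IsSpecLUB D ⟨closure (⋃ A ∈ D, A.toSet), directed_union_mem_dSets hD⟩ := by
  constructor
  · intro A hA
    exact PH_specLE_iff.mpr fun x hx => subset_closure (Set.mem_biUnion hA hx)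
  · intro u hu
    refine PH_specLE_iff.mpr (closure_minimal ?_ u.mem.1)
    exact Set.iUnion₂_subset fun A hA => PH_specLE_iff.mp (hu A hA)

theorem PH_scottOpen {D : Set (PH (dSets X))} (hD : SpecDirected D) {s : PH (dSets X)}
    (hs : IsSpecLUB D s) {V : Set (PH (dSets X))} (hV : IsOpen V) (hsV : s ∈ V) :
    (D ∩ V).Nonempty := by
  have hS := directed_union_isLUB hD
  have hsub : s.toSet ⊆ closure (⋃ A ∈ D, A.toSet) := PH_specLE_iff.mp (hs.2 _ hS.1)
  induction PH.generateOpen_of_isOpen hV with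
  | basic V hVmem =>
    obtain ⟨U, hU, rfl⟩ := hVmem
    obtain ⟨x, hxs, hxU⟩ := hsV
    have h1 : ((⋃ A ∈ D, A.toSet) ∩ U).Nonempty :=
      (closure_inter_open_nonempty hU).mp ⟨x, hsub hxs, hxU⟩
    obtain ⟨z, hz, hzU⟩ := h1
    obtain ⟨A, hAD, hzA⟩ := Set.mem_iUnion₂.mp hz
    exact ⟨A, hAD, z, hzA, hzU⟩
  | univ => exact ⟨hD.1.choose, hD.1.choose_spec, trivial⟩
  | inter V₁ V₂ h₁ h₂ ih₁ ih₂ =>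
    obtain ⟨A₁, hA₁D, hA₁V⟩ := ih₁ (PH.isOpen_of_generateOpen h₁) hsV.1
    obtain ⟨A₂, hA₂D, hA₂V⟩ := ih₂ (PH.isOpen_of_generateOpen h₂) hsV.2
    obtain ⟨C, hCD, hC₁, hC₂⟩ := hD.2 A₁ hA₁D A₂ hA₂D
    exact ⟨C, hCD, mem_of_specLE_of_isOpen (PH.isOpen_of_generateOpen h₁) hA₁V hC₁,
      mem_of_specLE_of_isOpen (PH.isOpen_of_generateOpen h₂) hA₂V hC₂⟩
  | sUnion S hS' ih =>
    obtain ⟨t, htS, hst⟩ := hsV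
    obtain ⟨A, hAD, hAt⟩ := ih t htS (PH.isOpen_of_generateOpen (hS' t htS)) hst
    exact ⟨A, hAD, t, htS, hAt⟩

theorem PH_t0 : T0Space (PH (dSets X)) := by
  rw [t0Space_iff_inseparable]
  intro A B h
  have h' : closure ({A} : Set (PH (dSets X))) = closure ({B} : Set (PH (dSets X))) :=
    inseparable_iff_closure_eq.mp h
  apply PH.toSet_injective
  apply subset_antisymm
  · exact PH_specLE_iff.mp (show A ∈ closure ({B} : Set (PH (dSets X))) by
      rw [← h']; exact subset_closure (Set.mem_singleton A))
  · exact PH_specLE_iff.mp (show B ∈ closure ({A} : Set (PH (dSets X))) by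
      rw [h']; exact subset_closure (Set.mem_singleton B))

end Main

theorem PH_dSets_isDSpace_and_is_d_reflection
    (X : Type u) [TopologicalSpace X] [T0Space X]
    (η : X → PH (dSets X)) (hη : ∀ x : X, (η x).toSet = closure ({x} : Set X)) :
    IsDSpace (PH (dSets X)) ∧ Continuous η ∧
      ∀ (Y : Type u) [TopologicalSpace Y], IsDSpace Y → ∀ f : X → Y, Continuous f →
        ∃! g : PH (dSets X) → Y, Continuous g ∧ g ∘ η = f := by
  have hDspace : IsDSpace (PH (dSets X)) :=
    ⟨PH_t0, fun D hD => ⟨_, directed_union_isLUB hD⟩,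
      fun U hU D hD s hs hsU => PH_scottOpen hD hs hU hsU⟩
  have hηc : Continuous η := by
    rw [continuous_def]
    intro V hV
    induction PH.generateOpen_of_isOpen hV with
    | basic V hVmem =>
      obtain ⟨U, hU, rfl⟩ := hVmem
      have heq : η ⁻¹' {A : PH (dSets X) | (A.toSet ∩ U).Nonempty} = U := by
        ext x
        simp only [Set.mem_preimage, Set.mem_setOf_eq, hη x]
        rw [closure_inter_open_nonempty hU, Set.singleton_inter_nonempty]
      rw [heq]; exact hU
    | univ => exact isOpen_univ
    | inter V₁ V₂ h₁ h₂ ih₁ ih₂ =>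
      exact (ih₁ (PH.isOpen_of_generateOpen h₁)).inter (ih₂ (PH.isOpen_of_generateOpen h₂))
    | sUnion S hS ih =>
      rw [Set.preimage_sUnion]
      exact isOpen_biUnion fun t ht => ih t ht (PH.isOpen_of_generateOpen (hS t ht))
  refine ⟨hDspace, hηc, ?_⟩
  intro Y _ hY f hf
  haveI := hY.1
  have hex : ∀ A : PH (dSets X), ∃! y : Y, closure (f '' A.toSet) = closure ({y} : Set Y) :=
    fun A => A.mem.2.2 Y hY f hf
  choose g hg hgu using hex
  have hgc : Continuous g := by
    rw [continuous_def]
    intro V hV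
    have heq : g ⁻¹' V = {A : PH (dSets X) | (A.toSet ∩ f ⁻¹' V).Nonempty} := by
      ext A
      simp only [Set.mem_preimage, Set.mem_setOf_eq]
      constructor
      · intro hgA
        have h1 : g A ∈ closure (f '' A.toSet) := by
          rw [hg A]; exact subset_closure (Set.mem_singleton _)
        obtain ⟨z, hzV, hzf⟩ := mem_closure_iff.mp h1 V hV hgA
        obtain ⟨x, hxA, rfl⟩ := hzf
        exact ⟨x, hxA, hzV⟩
      · rintro ⟨x, hxA, hxV⟩
        have h1 : f x ∈ closure ({g A} : Set Y) := by
          rw [← hg A]; exact subset_closure ⟨x, hxA, rfl⟩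
        obtain ⟨z, hzV, hzg⟩ := mem_closure_iff.mp h1 V hV hxV
        rw [Set.mem_singleton_iff] at hzg
        exact hzg ▸ hzV
    rw [heq]
    exact isOpen_diamond (hV.preimage hf)
  have hcomp : g ∘ η = f := by
    funext x
    have h1 : closure (f '' (η x).toSet) = closure ({f x} : Set Y) := by
      rw [hη x, closure_image_closure hf, Set.image_singleton]
    exact (hgu (η x) (f x) h1).symm
  refine ⟨g, ⟨hgc, hcomp⟩, ?_⟩
  rintro g' ⟨hg'c, hg'comp⟩
  funext A
  -- A is the limit of η '' A.toSet in PH (dSets X)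
  obtain ⟨B, hB, _⟩ := A.mem.2.2 (PH (dSets X)) hDspace η hηc
  have hBA : B = A := by
    apply PH.toSet_injective
    apply subset_antisymm
    · have h1 : closure (η '' A.toSet) ⊆ closure ({A} : Set (PH (dSets X))) := by
        apply closure_minimal _ isClosed_closure
        rintro _ ⟨x, hxA, rfl⟩
        exact PH_specLE_iff.mpr (by
          rw [hη x]
          exact closure_minimal (Set.singleton_subset_iff.mpr hxA) A.mem.1)
      have hBmem : B ∈ closure ({A} : Set (PH (dSets X))) := by
        apply h1
        rw [hB]; exact subset_closure (Set.mem_singleton B)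
      exact PH_specLE_iff.mp hBmem
    · intro x hx
      have h2 : η x ∈ closure ({B} : Set (PH (dSets X))) := by
        rw [← hB]; exact subset_closure ⟨x, hx, rfl⟩
      have h3 : (η x).toSet ⊆ B.toSet := PH_specLE_iff.mp h2
      have h4 : x ∈ (η x).toSet := by
        rw [hη x]; exact subset_closure (Set.mem_singleton x)
      exact h3 h4
  have hAcl : A ∈ closure (η '' A.toSet) := by
    rw [hB, hBA]; exact subset_closure (Set.mem_singleton A)
  have hle1 : specLE (g' A) (g A) := by
    have h3 : g' A ∈ closure (g' '' (η '' A.toSet)) :=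
      image_closure_subset_closure_image hg'c ⟨A, hAcl, rfl⟩
    have h4 : g' '' (η '' A.toSet) = f '' A.toSet := by
      rw [← Set.image_comp, hg'comp]
    rw [h4, hg A] at h3
    exact h3
  have hle2 : specLE (g A) (g' A) := by
    have h5 : f '' A.toSet ⊆ closure ({g' A} : Set Y) := by
      rintro _ ⟨x, hx, rfl⟩
      have hxA : specLE (η x) A := PH_specLE_iff.mpr (by
        rw [hη x]
        exact closure_minimal (Set.singleton_subset_iff.mpr hx) A.mem.1)
      have h6 := specLE_map hg'c hxA
      rwa [show g' (η x) = f x from congrFun hg'comp x] at h6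
    have h7 : closure (f '' A.toSet) ⊆ closure ({g' A} : Set Y) :=
      closure_minimal h5 isClosed_closure
    have h8 : g A ∈ closure (f '' A.toSet) := by
      rw [hg A]; exact subset_closure (Set.mem_singleton _)
    exact h7 h8
  exact specLE_antisymm hle1 hle2
end
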